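/- arXiv:0905.2620 — 8 statements merged into one kernel-verified Lean document; each statement's English description precedes it below -/
import Mathlib

section
/- With notation as in the time-dependent orthogonal polynomial setup, the derivative of the sub-leading coefficient satisfies (d/dt) p_1(n,t) = β_n(t) for n ≥ 1, and consequently α_n'(t) = β_n(t) - β_{n+1}(t) (the second Toda equation). -/
/-!
Write `L_s p = ∫ p w₀ e^{-sx}`, so that `d/ds L_s p = -L_s (X p)`. Fix `t` and `Q = P_{n-1}(t)`.
Since `P_n(s) - P_n(t)` has degree `< n`, orthogonality at time `t` gives
`L_t (P_n(s) Q) = (p₁(n,s) - p₁(n,t)) h_{n-1}(t)`. On the other hand `L_s (P_n(s) Q) = 0` for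
every `s`, so the derivative of `s ↦ L_t (P_n(s) Q)` at `t` can be moved from the polynomial to
the functional: it is `L_t (X P_n(t) Q) = h_n(t)`. This needs no differentiability of `P_n` in
`s`, only continuity of its coefficients. These solve a linear system whose matrix, the Hankel
matrix of the moments of `L_s`, is invertible because no `h_k` vanishes.
-/

open MeasureTheory intervalIntegral Polynomial Matrix

theorem LinearMap.apply_mul_eq_sum_coeff {R : Type*} [CommRing R] (L : R[X] →ₗ[R] R)
    {p : R[X]} {N : ℕ} (hp : p.natDegree < N) (q : R[X]) :
    L (p * q) = ∑ i ∈ Finset.range N, p.coeff i * L (X ^ i * q) := by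
  conv_lhs => rw [p.as_sum_range_C_mul_X_pow' hp]
  simp only [Finset.sum_mul, map_sum, ← smul_eq_C_mul, smul_mul_assoc, map_smul,
    smul_eq_mul]

structure IsMonicOrthogonalSeq {R : Type*} [CommRing R] (L : R[X] →ₗ[R] R) (P : ℕ → R[X])
    (h : ℕ → R) : Prop where
  monic : ∀ n, (P n).Monic
  natDegree_eq : ∀ n, (P n).natDegree = n
  orthogonal : ∀ i j, L (P i * P j) = if i = j then h i else 0

namespace IsMonicOrthogonalSeq

variable {R : Type*} [CommRing R] {L : R[X] →ₗ[R] R} {P : ℕ → R[X]} {h : ℕ → R}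

theorem coeff_self (hP : IsMonicOrthogonalSeq L P h) (n : ℕ) : (P n).coeff n = 1 := by
  simpa [hP.natDegree_eq] using (hP.monic n).coeff_natDegree

theorem degree_eq [Nontrivial R] (hP : IsMonicOrthogonalSeq L P h) (n : ℕ) :
    (P n).degree = n := by
  rw [degree_eq_natDegree (hP.monic n).ne_zero, hP.natDegree_eq]

theorem degree_sub_C_mul_lt (hP : IsMonicOrthogonalSeq L P h) {q : R[X]} {d : ℕ}
    (hq : q.degree ≤ d) : (q - C (q.coeff d) * P d).degree < d := by
  rw [degree_lt_iff_coeff_zero]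
  intro m hm
  rcases hm.eq_or_lt with rfl | hlt
  · simp [hP.coeff_self]
  · have hPm : (P d).coeff m = 0 :=
      coeff_eq_zero_of_natDegree_lt (by rwa [hP.natDegree_eq])
    simp [coeff_eq_zero_of_degree_lt (hq.trans_lt (WithBot.coe_lt_coe.2 hlt)), hPm]

theorem apply_mul_eq_zero_of_degree_lt (hP : IsMonicOrthogonalSeq L P h) {n : ℕ} {q : R[X]}
    (hq : q.degree < n) : L (P n * q) = 0 := by
  suffices ∀ d ≤ n, ∀ q : R[X], q.degree < d → L (P n * q) = 0 from this n le_rfl q hq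
  intro d
  induction d with
  | zero => intro _ q hq; simp [degree_eq_bot.1 (Nat.WithBot.lt_zero_iff.1 hq)]
  | succ d ih =>
    intro hdn q hq
    have hq' : q.degree ≤ d := Order.le_of_lt_succ (by exact_mod_cast hq)
    have hsplit : P n * q = P n * (q - C (q.coeff d) * P d) + q.coeff d • (P n * P d) := by
      rw [smul_eq_C_mul]; ring
    rw [hsplit, map_add, map_smul, ih (by omega) _ (hP.degree_sub_C_mul_lt hq'),
      hP.orthogonal, if_neg (by omega), smul_zero, add_zero]

theorem apply_mul_of_degree_le (hP : IsMonicOrthogonalSeq L P h) {n : ℕ} {q : R[X]}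
    (hq : q.degree ≤ n) : L (P n * q) = q.coeff n * h n := by
  have hsplit : P n * q = P n * (q - C (q.coeff n) * P n) + q.coeff n • (P n * P n) := by
    rw [smul_eq_C_mul]; ring
  rw [hsplit, map_add, map_smul, hP.apply_mul_eq_zero_of_degree_lt (hP.degree_sub_C_mul_lt hq),
    hP.orthogonal, if_pos rfl, smul_eq_mul, zero_add]

theorem apply_monic_mul (hP : IsMonicOrthogonalSeq L P h) {n : ℕ} {p : R[X]} (hp : p.Monic)
    (hpdeg : p.natDegree = n + 1) : L (p * P n) = (p.coeff n - (P (n + 1)).coeff n) * h n := by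
  have hD : (p - P (n + 1)).degree ≤ n := by
    have := hP.degree_sub_C_mul_lt (degree_le_of_natDegree_le hpdeg.le)
    rw [← hpdeg, hp.coeff_natDegree, C_1, one_mul, hpdeg] at this
    exact Order.le_of_lt_succ (by exact_mod_cast this)
  rw [show p * P n = P n * (p - P (n + 1)) + P (n + 1) * P n by ring, map_add,
    hP.apply_mul_of_degree_le hD, hP.orthogonal, if_neg (by omega), add_zero, coeff_sub]

end IsMonicOrthogonalSeq

noncomputable def hankelMatrix {R : Type*} [CommRing R] (L : R[X] →ₗ[R] R) (n : ℕ) :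
    Matrix (Fin n) (Fin n) R :=
  Matrix.of fun i j => L (X ^ ((i : ℕ) + j))

namespace IsMonicOrthogonalSeq

variable {K : Type*} [Field K] {L : K[X] →ₗ[K] K} {P : ℕ → K[X]} {h : ℕ → K}

theorem eq_zero_of_forall_apply_X_pow_mul_eq_zero (hP : IsMonicOrthogonalSeq L P h) {n : ℕ}
    (hh : ∀ k < n, h k ≠ 0) {q : K[X]} (hq : q.degree < n)
    (horth : ∀ i < n, L (X ^ i * q) = 0) : q = 0 := by
  by_contra hq0
  have hd : q.natDegree < n := (natDegree_lt_iff_degree_lt hq0).2 hq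
  have hzero : L (P q.natDegree * q) = 0 := by
    rw [L.apply_mul_eq_sum_coeff (N := n) (by rwa [hP.natDegree_eq])]
    exact Finset.sum_eq_zero fun i hi => by rw [horth i (Finset.mem_range.1 hi), mul_zero]
  rw [hP.apply_mul_of_degree_le degree_le_natDegree, coeff_natDegree] at hzero
  exact mul_ne_zero (leadingCoeff_ne_zero.2 hq0) (hh _ hd) hzero

theorem det_hankelMatrix_ne_zero (hP : IsMonicOrthogonalSeq L P h) {n : ℕ}
    (hh : ∀ k < n, h k ≠ 0) : (hankelMatrix L n).det ≠ 0 := by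
  rw [Ne, ← Matrix.exists_mulVec_eq_zero_iff]
  rintro ⟨y, hy0, hy⟩
  set q : K[X] := ∑ j : Fin n, C (y j) * X ^ (j : ℕ)
  have hq : q = 0 := by
    refine hP.eq_zero_of_forall_apply_X_pow_mul_eq_zero hh (degree_sum_fin_lt y) fun i hi => ?_
    have := congrFun hy ⟨i, hi⟩
    simp only [hankelMatrix, mulVec, dotProduct, of_apply, Pi.zero_apply] at this
    rw [Finset.mul_sum, map_sum, ← this]
    refine Finset.sum_congr rfl fun j _ => ?_
    rw [mul_left_comm, ← smul_eq_C_mul, map_smul, smul_eq_mul, ← pow_add, mul_comm]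
  exact hy0 (funext fun j => by
    simpa [q, finsetSum_coeff, coeff_C_mul_X_pow, Fin.val_inj] using congrArg (coeff · j) hq)

theorem hankelMatrix_mulVec_coeff (hP : IsMonicOrthogonalSeq L P h) (n : ℕ) :
    hankelMatrix L n *ᵥ (fun j : Fin n => (P n).coeff j) =
      fun i : Fin n => -L (X ^ ((i : ℕ) + n)) := by
  ext i
  have h0 := hP.apply_mul_eq_zero_of_degree_lt (n := n) (q := X ^ (i : ℕ))
    (by rw [degree_X_pow]; exact_mod_cast i.2)
  rw [L.apply_mul_eq_sum_coeff (N := n + 1) (by rw [hP.natDegree_eq]; omega),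
    Finset.sum_range_succ, hP.coeff_self, ← Fin.sum_univ_eq_sum_range] at h0
  simp only [mulVec, dotProduct, hankelMatrix, of_apply]
  rw [eq_neg_iff_add_eq_zero, ← h0]
  simp [pow_add, mul_comm]

theorem coeff_eq_hankelMatrix_inv_mulVec (hP : IsMonicOrthogonalSeq L P h) {n : ℕ}
    (hh : ∀ k < n, h k ≠ 0) :
    (fun j : Fin n => (P n).coeff j) =
      (hankelMatrix L n)⁻¹ *ᵥ fun i : Fin n => -L (X ^ ((i : ℕ) + n)) := by
  rw [← hP.hankelMatrix_mulVec_coeff, Matrix.mulVec_mulVec,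
    Matrix.nonsing_inv_mul _ (isUnit_iff_ne_zero.2 (hP.det_hankelMatrix_ne_zero hh)),
    Matrix.one_mulVec]

end IsMonicOrthogonalSeq

/-- A product rule in which the `c j` need only be continuous: the diagonal relation turns the
slope of the sum at `t` into `-∑ j ∈ S, c j s * slope (m j) t s`. -/
theorem hasDerivAt_sum_mul_of_sum_mul_self_eq_zero {ι : Type*} {S : Finset ι}
    {c m : ι → ℝ → ℝ} {m' : ι → ℝ} {t : ℝ} (hc : ∀ j ∈ S, ContinuousAt (c j) t)
    (hm : ∀ j ∈ S, HasDerivAt (m j) (m' j) t) (hdiag : ∀ s, ∑ j ∈ S, c j s * m j s = 0) :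
    HasDerivAt (fun s => ∑ j ∈ S, c j s * m j t) (-∑ j ∈ S, c j t * m' j) t := by
  have hslope : slope (fun s => ∑ j ∈ S, c j s * m j t) t =
      fun s => -∑ j ∈ S, c j s * slope (m j) t s := by
    funext s
    simp only [slope_def_field, hdiag t, sub_zero, mul_div_assoc', ← Finset.sum_div, mul_sub,
      Finset.sum_sub_distrib, hdiag s]
    ring
  rw [hasDerivAt_iff_tendsto_slope, hslope]
  exact (tendsto_finsetSum S fun j hj => ((hc j hj).tendsto.mono_left nhdsWithin_le_nhds).mul
    (hasDerivAt_iff_tendsto_slope.1 (hm j hj))).neg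

section TodaFlow

variable {L : ℝ → ℝ[X] →ₗ[ℝ] ℝ} {P : ℕ → ℝ → ℝ[X]} {h : ℕ → ℝ → ℝ}

theorem continuous_coeff_of_isMonicOrthogonalSeq (hL : ∀ p, Continuous fun s => L s p)
    (hP : ∀ s, IsMonicOrthogonalSeq (L s) (P · s) (h · s)) (hh : ∀ k s, h k s ≠ 0)
    (n j : ℕ) : Continuous fun s => (P n s).coeff j := by
  rcases lt_trichotomy j n with hj | rfl | hj
  · have hH : Continuous fun s => hankelMatrix (L s) n := continuous_matrix fun _ _ => hL _
    have hHinv : Continuous fun s => (hankelMatrix (L s) n)⁻¹ :=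
      continuous_iff_continuousAt.2 fun s => (continuousAt_matrix_inv _ (by
        rw [Ring.inverse_eq_inv']
        exact continuousAt_inv₀ ((hP s).det_hankelMatrix_ne_zero fun k _ => hh k s))).comp
          hH.continuousAt
    have hformula : ∀ s, (P n s).coeff j = ((hankelMatrix (L s) n)⁻¹ *ᵥ
        fun i : Fin n => -L s (X ^ ((i : ℕ) + n))) ⟨j, hj⟩ := fun s =>
      congrFun ((hP s).coeff_eq_hankelMatrix_inv_mulVec fun k _ => hh k s) ⟨j, hj⟩
    simp_rw [hformula]
    exact (continuous_apply _).comp (hHinv.matrix_mulVec (continuous_pi fun _ => (hL _).neg))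
  · simpa [(hP _).coeff_self] using continuous_const
  · simpa [coeff_eq_zero_of_natDegree_lt (((hP _).natDegree_eq n).trans_lt hj)] using
      continuous_const

theorem hasDerivAt_apply_mul_of_isMonicOrthogonalSeq
    (hL : ∀ p s, HasDerivAt (fun s => L s p) (-L s (X * p)) s)
    (hP : ∀ s, IsMonicOrthogonalSeq (L s) (P · s) (h · s)) (hh : ∀ k s, h k s ≠ 0)
    {n : ℕ} {Q : ℝ[X]} (hQ : Q.degree < n) (t : ℝ) :
    HasDerivAt (fun s => L t (P n s * Q)) (L t (P n t * (X * Q))) t := by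
  have hexpand : ∀ p : ℝ[X], p.natDegree = n → ∀ v, L v (p * Q) =
      ∑ j ∈ Finset.range (n + 1), p.coeff j * L v (X ^ j * Q) := fun p hp v =>
    (L v).apply_mul_eq_sum_coeff (by omega) Q
  have hcont : ∀ j, Continuous fun s => (P n s).coeff j :=
    continuous_coeff_of_isMonicOrthogonalSeq
      (fun p => continuous_iff_continuousAt.2 fun s => (hL p s).continuousAt) hP hh n
  have hsum := hasDerivAt_sum_mul_of_sum_mul_self_eq_zero (S := Finset.range (n + 1))
    (c := fun j s => (P n s).coeff j) (m := fun j v => L v (X ^ j * Q))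
    (fun j _ => (hcont j).continuousAt) (fun j _ => hL _ t)
    (fun s => by
      rw [← hexpand _ ((hP s).natDegree_eq n)]
      exact (hP s).apply_mul_eq_zero_of_degree_lt hQ)
  simp only [mul_neg, Finset.sum_neg_distrib, neg_neg, mul_left_comm X,
    ← hexpand _ ((hP _).natDegree_eq n)] at hsum
  rwa [← (L t).apply_mul_eq_sum_coeff (by rw [(hP t).natDegree_eq]; omega)] at hsum

theorem hasDerivAt_coeff_of_isMonicOrthogonalSeq
    (hL : ∀ p s, HasDerivAt (fun s => L s p) (-L s (X * p)) s)
    (hP : ∀ s, IsMonicOrthogonalSeq (L s) (P · s) (h · s)) (hh : ∀ k s, h k s ≠ 0)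
    (n : ℕ) (t : ℝ) :
    HasDerivAt (fun s => (P (n + 1) s).coeff n) (h (n + 1) t / h n t) t := by
  have hQ : (P n t).degree < ↑(n + 1) := by
    rw [(hP t).degree_eq]
    exact_mod_cast n.lt_succ_self
  have hXQ : (X * P n t).degree ≤ ↑(n + 1) := by
    rw [degree_mul, degree_X, (hP t).degree_eq, add_comm]
    norm_cast
  have hderiv := hasDerivAt_apply_mul_of_isMonicOrthogonalSeq hL hP hh hQ t
  rw [(hP t).apply_mul_of_degree_le hXQ, coeff_X_mul, (hP t).coeff_self, one_mul] at hderiv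
  have hcoeff : (fun s => (P (n + 1) s).coeff n) =
      fun s => (P (n + 1) t).coeff n + L t (P (n + 1) s * P n t) / h n t := by
    funext s
    rw [(hP t).apply_monic_mul ((hP s).monic _) ((hP s).natDegree_eq _),
      mul_div_cancel_right₀ _ (hh n t)]
    ring
  rw [hcoeff]
  exact (hderiv.div_const _).const_add _

end TodaFlow

open Real Interval in
theorem hasDerivAt_integral_mul_exp_neg_mul {f : ℝ → ℝ} {a b : ℝ}
    (hf : IntervalIntegrable f volume a b) (t : ℝ) :
    HasDerivAt (fun s => ∫ x in a..b, f x * exp (-s * x))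
      (∫ x in a..b, -(x * f x * exp (-t * x))) t := by
  set R := |a| + |b|
  have hR : ∀ x ∈ Ι a b, |x| ≤ R := fun x hx => by
    rcases Set.mem_uIcc.1 (Set.uIoc_subset_uIcc hx) with ⟨h₁, h₂⟩ | ⟨h₁, h₂⟩ <;>
      exact abs_le.2 ⟨by linarith [neg_abs_le a, neg_abs_le b, abs_nonneg a, abs_nonneg b],
        by linarith [le_abs_self a, le_abs_self b, abs_nonneg a, abs_nonneg b]⟩
  have hF : ∀ s, IntervalIntegrable (fun x => f x * exp (-s * x)) volume a b := fun s =>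
    hf.mul_continuousOn (by fun_prop)
  have hF' : IntervalIntegrable (fun x => -(x * f x * exp (-t * x))) volume a b :=
    ((hf.continuousOn_mul continuousOn_id).mul_continuousOn (by fun_prop)).neg
  refine (intervalIntegral.hasDerivAt_integral_of_dominated_loc_of_deriv_le
    (F' := fun s x => -(x * f x * exp (-s * x)))
    (bound := fun x => R * exp (R * (|t| + 1)) * ‖f x‖) (Metric.ball_mem_nhds t one_pos)
    (.of_forall fun s => (hF s).def'.aestronglyMeasurable) (hF t) hF'.def'.aestronglyMeasurable
    (.of_forall fun x hx s hs => ?_) (hf.norm.const_mul _)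
    (.of_forall fun x _ s _ => ?_)).2
  · have hs : |s| ≤ |t| + 1 := by
      have := abs_sub_abs_le_abs_sub s t
      linarith [Metric.mem_ball.1 hs, Real.dist_eq s t]
    have hexp : exp (-s * x) ≤ exp (R * (|t| + 1)) := exp_le_exp.2 <| by
      calc -s * x ≤ |s| * |x| := by rw [← abs_mul]; exact neg_mul s x ▸ neg_le_abs _
        _ ≤ (|t| + 1) * R := mul_le_mul hs (hR x hx) (abs_nonneg x) (by positivity)
        _ = R * (|t| + 1) := mul_comm _ _
    rw [norm_neg, norm_mul, norm_mul, Real.norm_eq_abs x, Real.norm_of_nonneg (exp_pos _).le]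
    calc |x| * ‖f x‖ * exp (-s * x) ≤ R * ‖f x‖ * exp (R * (|t| + 1)) := by
          gcongr
          exact hR x hx
      _ = R * exp (R * (|t| + 1)) * ‖f x‖ := by ring
  · have hlin : HasDerivAt (fun s => -s * x) (-x) s := by
      simpa using (hasDerivAt_neg s).mul_const x
    exact (hlin.exp.const_mul (f x)).congr_deriv (by ring)

open Real in
theorem intervalIntegrable_eval_mul_mul_exp {a b : ℝ} {w : ℝ → ℝ}
    (hw : IntervalIntegrable w volume a b) (p : ℝ[X]) (s : ℝ) :
    IntervalIntegrable (fun x => p.eval x * w x * exp (-s * x)) volume a b :=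
  (hw.continuousOn_mul p.continuous.continuousOn).mul_continuousOn (by fun_prop)

open Real in
noncomputable def expTiltedFunctional {a b : ℝ} (w : ℝ → ℝ)
    (hw : IntervalIntegrable w volume a b) (s : ℝ) : ℝ[X] →ₗ[ℝ] ℝ where
  toFun p := ∫ x in a..b, p.eval x * w x * exp (-s * x)
  map_add' p q := by
    simp only [eval_add, add_mul]
    exact intervalIntegral.integral_add (intervalIntegrable_eval_mul_mul_exp hw p s)
      (intervalIntegrable_eval_mul_mul_exp hw q s)
  map_smul' c p := by
    simp only [eval_smul, smul_eq_mul, mul_assoc, intervalIntegral.integral_const_mul,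
      RingHom.id_apply]

theorem hasDerivAt_expTiltedFunctional {a b : ℝ} {w : ℝ → ℝ}
    (hw : IntervalIntegrable w volume a b) (p : ℝ[X]) (t : ℝ) :
    HasDerivAt (fun s => expTiltedFunctional w hw s p) (-expTiltedFunctional w hw t (X * p)) t :=
  (hasDerivAt_integral_mul_exp_neg_mul (hw.continuousOn_mul p.continuous.continuousOn)
    t).congr_deriv (by simp [expTiltedFunctional, ← intervalIntegral.integral_neg, mul_assoc])

theorem second_toda_general (w₀ : ℝ → ℝ) (hw₀ : ContinuousOn w₀ (Set.Icc (-1) 1))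
    (P : ℕ → ℝ → Polynomial ℝ)
    (hmonic : ∀ n t, (P n t).Monic) (hdeg : ∀ n t, (P n t).natDegree = n)
    (h : ℕ → ℝ → ℝ)
    (horth : ∀ i j t, (∫ x in (-1:ℝ)..1,
        (P i t).eval x * (P j t).eval x * w₀ x * Real.exp (-t * x)) =
      if i = j then h i t else 0)
    (hpos : ∀ n t, 0 < h n t)
    (a b : ℕ → ℝ → ℝ)
    (hb : ∀ (n : ℕ) (t : ℝ), 1 ≤ n → b n t = h n t / h (n - 1) t)
    (p₁ : ℕ → ℝ → ℝ)
    (hp₁ : ∀ n t, p₁ n t = (P n t).coeff (n - 1))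
    (ha : ∀ n t, a n t = p₁ n t - p₁ (n + 1) t) :
    ∀ (n : ℕ) (t : ℝ), 1 ≤ n →
      HasDerivAt (fun s => p₁ n s) (b n t) t ∧
      HasDerivAt (fun s => a n s) (b n t - b (n + 1) t) t := by
  have hw : IntervalIntegrable w₀ volume (-1) 1 := hw₀.intervalIntegrable_of_Icc (by norm_num)
  have hP : ∀ s, IsMonicOrthogonalSeq (expTiltedFunctional w₀ hw s) (P · s) (h · s) :=
    fun s => ⟨(hmonic · s), (hdeg · s), fun i j => by
      rw [← horth]; simp [expTiltedFunctional, eval_mul]⟩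
  have hp₁_succ : ∀ n t, HasDerivAt (fun s => p₁ (n + 1) s) (b (n + 1) t) t := fun n t => by
    simp only [hp₁, add_tsub_cancel_right, hb (n + 1) t (by omega)]
    exact hasDerivAt_coeff_of_isMonicOrthogonalSeq (hasDerivAt_expTiltedFunctional hw) hP
      (fun k s => (hpos k s).ne') n t
  intro n t hn
  obtain ⟨n, rfl⟩ := Nat.exists_eq_add_of_le' hn
  simp only [ha]
  exact ⟨hp₁_succ n t, (hp₁_succ n t).sub (hp₁_succ (n + 1) t)⟩

/-- `(d/dt) p₁(n,t) = β_n(t)` for `n ≥ 1`, and consequently the second Toda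
equation `α_n'(t) = β_n(t) - β_{n+1}(t)`, where `p₁(n,t)` is the coefficient of `z^{n-1}`
in the monic orthogonal polynomial `P_n`. -/
theorem second_toda (w₀ : ℝ → ℝ) (hw₀ : ContinuousOn w₀ (Set.Icc (-1) 1))
    (hw₀pos : ∀ x ∈ Set.Icc (-1:ℝ) 1, 0 < w₀ x)
    (P : ℕ → ℝ → Polynomial ℝ)
    (hmonic : ∀ n t, (P n t).Monic) (hdeg : ∀ n t, (P n t).natDegree = n)
    (h : ℕ → ℝ → ℝ)
    (horth : ∀ i j t, (∫ x in (-1:ℝ)..1,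
        (P i t).eval x * (P j t).eval x * w₀ x * Real.exp (-t * x)) =
      if i = j then h i t else 0)
    (hpos : ∀ n t, 0 < h n t)
    (a b : ℕ → ℝ → ℝ)
    (hrec : ∀ (n : ℕ) (t : ℝ), 1 ≤ n →
      Polynomial.X * P n t =
        P (n + 1) t + Polynomial.C (a n t) * P n t + Polynomial.C (b n t) * P (n - 1) t)
    (hb : ∀ (n : ℕ) (t : ℝ), 1 ≤ n → b n t = h n t / h (n - 1) t)
    (p₁ : ℕ → ℝ → ℝ)
    (hp₁ : ∀ n t, p₁ n t = (P n t).coeff (n - 1))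
    (ha : ∀ n t, a n t = p₁ n t - p₁ (n + 1) t) :
    ∀ (n : ℕ) (t : ℝ), 1 ≤ n →
      HasDerivAt (fun s => p₁ n s) (b n t) t ∧
      HasDerivAt (fun s => a n s) (b n t - b (n + 1) t) t :=
  second_toda_general w₀ hw₀ P hmonic hdeg h horth hpos a b hb p₁ hp₁ ha
end

section
/- The Toda molecule equation holds: (d²/dt²) log D_n(t) = β_n(t) = D_{n+1}(t) D_{n-1}(t) / D_n(t)², for n ≥ 1. -/
/-!
Let `L_t` be the moment functional `X ^ k ↦ μ_k(t)` on `ℝ[X]`. A Hankel determinant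
`det (μ_{r_i + c_j})` is the Gram determinant of the monomials `X ^ r_i`, `X ^ c_j` for
`(p, q) ↦ L_t (p q)`, and it is unchanged when these monomials are replaced by monic polynomials
supported on the same exponents. Using the orthogonal polynomials, and for the exponents
`0, …, m - 1, m + 1` the polynomial `P_{m+1} - c P_m` with no `X ^ m` term, the Gram matrices
become diagonal. Hence `D_n = ∏_{k<n} h_k`, and the determinants `Δ` and `K` obtained from
`D_{m+1}` by raising the exponent of the last row, resp. of the last row and column, by one
satisfy the Sylvester identity `K D_{m+1} - Δ² = D_{m+2} D_m`.

On the other hand `μ_k' = -μ_{k+1}`, so differentiating a Hankel determinant column by column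
raises one column exponent at a time; all but the last of these terms have two equal columns.
Thus `D_{m+1}' = -Δ`, `Δ' = -K` and `(log D_{m+1})'' = (K D_{m+1} - Δ²) / D_{m+1}²`.
-/

open MeasureTheory intervalIntegral Polynomial Finset

open Matrix

namespace Toda

section Gram

variable {R : Type*} [CommRing R] {ι : Type*}

noncomputable def momentFunctional (μ : ℕ → R) : R[X] →ₗ[R] R :=
  Polynomial.lsum fun k => LinearMap.smulRight LinearMap.id (μ k)

lemma momentFunctional_apply (μ : ℕ → R) (p : R[X]) :
    momentFunctional μ p = ∑ k ∈ range (p.natDegree + 1), p.coeff k * μ k := by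
  simp [momentFunctional, Polynomial.lsum_apply, sum_over_range]

lemma momentFunctional_X_pow (μ : ℕ → R) (k : ℕ) : momentFunctional μ (X ^ k) = μ k := by
  simp [momentFunctional, ← monomial_one_right_eq_X_pow, sum_monomial_index]

def hankel {S : Type*} (μ : ℕ → S) (r c : ι → ℕ) : Matrix ι ι S :=
  of fun i j => μ (r i + c j)

noncomputable def gram (L : R[X] →ₗ[R] R) (u v : ι → R[X]) : Matrix ι ι R :=
  of fun i j => L (u i * v j)

lemma gram_momentFunctional_X_pow (μ : ℕ → R) (r c : ι → ℕ) :
    gram (momentFunctional μ) (fun i => X ^ r i) (fun j => X ^ c j) = hankel μ r c := by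
  ext i j
  simp [gram, hankel, ← pow_add, momentFunctional_X_pow]

variable (L : R[X] →ₗ[R] R)

lemma gram_transpose (u v : ι → R[X]) : (gram L u v)ᵀ = gram L v u := by
  ext i j
  simp [gram, mul_comm]

lemma gram_sum_smul_left [Fintype ι] (U : Matrix ι ι R) (u v : ι → R[X]) :
    gram L (fun i => ∑ a, U i a • u a) v = U * gram L u v := by
  ext i j
  simp [gram, mul_apply, Finset.sum_mul]

lemma eq_sum_coeff_smul_X_pow [Fintype ι] {p : R[X]} {r : ι → ℕ} (hr : Function.Injective r)
    (hp : ∀ k, p.coeff k ≠ 0 → k ∈ Set.range r) : p = ∑ a, p.coeff (r a) • X ^ r a := by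
  classical
  ext k
  simp only [finsetSum_coeff, coeff_smul, coeff_X_pow, smul_eq_mul, mul_ite, mul_one, mul_zero]
  by_cases hk : k ∈ Set.range r
  · obtain ⟨a, rfl⟩ := hk
    rw [Finset.sum_eq_single a (fun b _ hb => if_neg fun h => hb (hr h).symm) (by simp),
      if_pos rfl]
  · rw [Finset.sum_eq_zero fun a _ => if_neg fun h => hk ⟨a, h.symm⟩]
    by_contra h
    exact hk (hp k h)

lemma det_gram_of_monic_left [Fintype ι] [LinearOrder ι] {F : ι → R[X]} {r : ι → ℕ}
    (hr : StrictMono r) (hmonic : ∀ i, (F i).Monic) (hdeg : ∀ i, (F i).natDegree = r i)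
    (hsupp : ∀ i k, (F i).coeff k ≠ 0 → k ∈ Set.range r) (v : ι → R[X]) :
    (gram L F v).det = (gram L (fun i => X ^ r i) v).det := by
  set U : Matrix ι ι R := of fun i a => (F i).coeff (r a)
  have hU : U.det = 1 := by
    rw [det_of_isLowerTriangular U fun i a hlt =>
      coeff_eq_zero_of_natDegree_lt ((hdeg i).trans_lt (hr hlt))]
    exact Finset.prod_eq_one fun i _ => by simpa [U, hdeg] using (hmonic i).coeff_natDegree
  have hF : F = fun i => ∑ a, U i a • X ^ r a :=
    funext fun i => eq_sum_coeff_smul_X_pow hr.injective (hsupp i)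
  rw [hF, gram_sum_smul_left, det_mul, hU, one_mul]

lemma det_gram_of_monic_right [Fintype ι] [LinearOrder ι] {F : ι → R[X]} {r : ι → ℕ}
    (hr : StrictMono r) (hmonic : ∀ i, (F i).Monic) (hdeg : ∀ i, (F i).natDegree = r i)
    (hsupp : ∀ i k, (F i).coeff k ≠ 0 → k ∈ Set.range r) (u : ι → R[X]) :
    (gram L u F).det = (gram L u (fun i => X ^ r i)).det := by
  rw [← det_transpose, gram_transpose, det_gram_of_monic_left L hr hmonic hdeg hsupp,
    ← gram_transpose, det_transpose]

lemma det_gram_of_orthogonal [Fintype ι] [DecidableEq ι] {u v : ι → R[X]}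
    (horth : ∀ i j, i ≠ j → L (u i * v j) = 0) : (gram L u v).det = ∏ i, L (u i * v i) := by
  rw [← det_diagonal]
  congr 1
  ext i j
  by_cases hij : i = j
  · simp [gram, hij]
  · simp [gram, hij, horth i j hij]

end Gram

section Orthogonal

def skipExps (m : ℕ) : Fin (m + 1) → ℕ := Function.update Fin.val (Fin.last m) (m + 1)

@[simp]
lemma skipExps_castSucc {m : ℕ} (i : Fin m) : skipExps m (Fin.castSucc i) = i := by
  simp [skipExps]

@[simp]
lemma skipExps_last (m : ℕ) : skipExps m (Fin.last m) = m + 1 := by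
  simp [skipExps]

lemma strictMono_skipExps (m : ℕ) : StrictMono (skipExps m) := by
  intro i j hij
  induction j using Fin.lastCases with
  | last =>
    induction i using Fin.lastCases with
    | last => exact absurd hij (lt_irrefl _)
    | cast i => simp
  | cast j =>
    induction i using Fin.lastCases with
    | last => exact absurd hij (Fin.castSucc_lt_last j).not_gt
    | cast i => simpa using hij

lemma mem_range_skipExps {m k : ℕ} (hk : k ≤ m + 1) (hkm : k ≠ m) :
    k ∈ Set.range (skipExps m) := by
  rcases Nat.lt_or_ge k m with hlt | hge
  · exact ⟨_, skipExps_castSucc ⟨k, hlt⟩⟩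
  · exact ⟨Fin.last m, by simp; omega⟩

variable {R : Type*} [CommRing R]

noncomputable def skipPoly (P : ℕ → R[X]) (m : ℕ) : R[X] :=
  P (m + 1) - (P (m + 1)).coeff m • P m

noncomputable def skipFamily (P : ℕ → R[X]) (m : ℕ) : Fin (m + 1) → R[X] :=
  Function.update (fun i => P i) (Fin.last m) (skipPoly P m)

@[simp]
lemma skipFamily_castSucc (P : ℕ → R[X]) {m : ℕ} (i : Fin m) :
    skipFamily P m (Fin.castSucc i) = P i := by
  simp [skipFamily]

@[simp]
lemma skipFamily_last (P : ℕ → R[X]) (m : ℕ) :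
    skipFamily P m (Fin.last m) = skipPoly P m := by
  simp [skipFamily]

variable (L : R[X] →ₗ[R] R) {P : ℕ → R[X]} {h : ℕ → R}
  (hmonic : ∀ n, (P n).Monic) (hdeg : ∀ n, (P n).natDegree = n)

include hdeg

lemma mem_range_val_of_coeff_ne_zero {n k : ℕ} (j : Fin n) (hk : (P j).coeff k ≠ 0) :
    k ∈ Set.range (Fin.val : Fin n → ℕ) :=
  ⟨⟨k, (le_natDegree_of_ne_zero hk).trans_lt ((hdeg j).trans_lt j.isLt)⟩, rfl⟩

lemma natDegree_smul_lt_succ (m : ℕ) (c : R) : (c • P m).natDegree < (P (m + 1)).natDegree :=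
  (natDegree_smul_le c (P m)).trans_lt (by rw [hdeg, hdeg]; omega)

lemma natDegree_skipPoly (m : ℕ) : (skipPoly P m).natDegree = m + 1 := by
  rw [skipPoly, natDegree_sub_eq_left_of_natDegree_lt (natDegree_smul_lt_succ hdeg m _), hdeg]

include hmonic

lemma det_gram_orthogonal_left {n : ℕ} (v : Fin n → R[X]) :
    (gram L (fun i : Fin n => P i) v).det = (gram L (fun i : Fin n => X ^ (i : ℕ)) v).det :=
  det_gram_of_monic_left L Fin.val_strictMono (fun i => hmonic i) (fun i => hdeg i)
    (fun _ _ => mem_range_val_of_coeff_ne_zero hdeg _) v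

lemma det_gram_orthogonal_right {n : ℕ} (u : Fin n → R[X]) :
    (gram L u (fun j : Fin n => P j)).det = (gram L u (fun j : Fin n => X ^ (j : ℕ))).det :=
  det_gram_of_monic_right L Fin.val_strictMono (fun i => hmonic i) (fun i => hdeg i)
    (fun _ _ => mem_range_val_of_coeff_ne_zero hdeg _) u

lemma coeff_skipPoly_self (m : ℕ) : (skipPoly P m).coeff m = 0 := by
  have := (hmonic m).coeff_natDegree
  rw [hdeg] at this
  simp [skipPoly, this]

lemma monic_skipPoly (m : ℕ) : (skipPoly P m).Monic :=
  (hmonic (m + 1)).sub_of_left (degree_lt_degree (natDegree_smul_lt_succ hdeg m _))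

lemma det_gram_skipFamily_left {m : ℕ} (v : Fin (m + 1) → R[X]) :
    (gram L (skipFamily P m) v).det = (gram L (fun i => X ^ skipExps m i) v).det := by
  refine det_gram_of_monic_left L (strictMono_skipExps m) (fun i => ?_) (fun i => ?_)
    (fun i k hk => ?_) v
  · induction i using Fin.lastCases with
    | last => simpa using monic_skipPoly hmonic hdeg m
    | cast i => simpa using hmonic i
  · induction i using Fin.lastCases with
    | last => simpa using natDegree_skipPoly hdeg m
    | cast i => simpa using hdeg i
  · induction i using Fin.lastCases with
    | last =>
      rw [skipFamily_last] at hk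
      refine mem_range_skipExps ?_ fun hkm => hk (hkm ▸ coeff_skipPoly_self hmonic hdeg m)
      simpa [natDegree_skipPoly hdeg m] using le_natDegree_of_ne_zero hk
    | cast i =>
      rw [skipFamily_castSucc] at hk
      have := (le_natDegree_of_ne_zero hk).trans_eq (hdeg i)
      exact mem_range_skipExps (by omega) (by omega)

lemma det_gram_skipFamily_right {m : ℕ} (u : Fin (m + 1) → R[X]) :
    (gram L u (skipFamily P m)).det = (gram L u (fun i => X ^ skipExps m i)).det := by
  rw [← det_transpose, gram_transpose, det_gram_skipFamily_left L hmonic hdeg, ← gram_transpose,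
    det_transpose]

omit hmonic hdeg

lemma map_skipPoly_mul (m : ℕ) (q : R[X]) :
    L (skipPoly P m * q) = L (P (m + 1) * q) - (P (m + 1)).coeff m * L (P m * q) := by
  rw [skipPoly, sub_mul, smul_mul_assoc, map_sub, map_smul, smul_eq_mul]

variable (horth : ∀ i j, L (P i * P j) = if i = j then h i else 0)
include horth

lemma map_skipPoly_mul_of_ne {m k : ℕ} (hk : k ≠ m) (hk' : k ≠ m + 1) :
    L (skipPoly P m * P k) = 0 := by
  simp [map_skipPoly_mul, horth, hk.symm, hk'.symm]

lemma map_skipPoly_mul_self (m : ℕ) :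
    L (skipPoly P m * skipPoly P m) = h (m + 1) + (P (m + 1)).coeff m ^ 2 * h m := by
  rw [map_skipPoly_mul, mul_comm (P (m + 1)), mul_comm (P m), map_skipPoly_mul,
    map_skipPoly_mul]
  simp [horth]
  ring

lemma map_skipFamily_mul_of_ne {m : ℕ} {i j : Fin (m + 1)} (hij : i ≠ j) :
    L (skipFamily P m i * P j) = 0 := by
  have hj := j.isLt
  induction i using Fin.lastCases with
  | last =>
    rw [skipFamily_last]
    exact map_skipPoly_mul_of_ne L horth (Fin.val_ne_of_ne hij.symm) (by omega)
  | cast i =>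
    rw [skipFamily_castSucc, horth]
    exact if_neg (Fin.val_ne_of_ne hij)

include hmonic hdeg

theorem det_gram_X_pow (n : ℕ) :
    (gram L (fun i : Fin n => X ^ (i : ℕ)) (fun j => X ^ (j : ℕ))).det
      = ∏ k ∈ range n, h k := by
  rw [← det_gram_orthogonal_left L hmonic hdeg, ← det_gram_orthogonal_right L hmonic hdeg,
    det_gram_of_orthogonal L fun i j hij => by simp [horth, Fin.val_injective.ne hij]]
  simp [horth, Fin.prod_univ_eq_prod_range (fun k => h k)]

theorem det_gram_skipExps_X_pow (m : ℕ) :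
    (gram L (fun i => X ^ skipExps m i) (fun j : Fin (m + 1) => X ^ (j : ℕ))).det
      = -(P (m + 1)).coeff m * ∏ k ∈ range (m + 1), h k := by
  rw [← det_gram_skipFamily_left L hmonic hdeg, ← det_gram_orthogonal_right L hmonic hdeg,
    det_gram_of_orthogonal L fun i j hij => map_skipFamily_mul_of_ne L horth hij]
  simp [Fin.prod_univ_castSucc, horth, map_skipPoly_mul, prod_range_succ,
    Fin.prod_univ_eq_prod_range (fun k => h k)]
  ring

theorem det_gram_skipExps_skipExps (m : ℕ) :
    (gram L (fun i => X ^ skipExps m i) (fun j => X ^ skipExps m j)).det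
      = (∏ k ∈ range m, h k) * (h (m + 1) + (P (m + 1)).coeff m ^ 2 * h m) := by
  rw [← det_gram_skipFamily_left L hmonic hdeg, ← det_gram_skipFamily_right L hmonic hdeg,
    det_gram_of_orthogonal L fun i j hij => ?_]
  · simp [Fin.prod_univ_castSucc, horth, map_skipPoly_mul_self L horth,
      Fin.prod_univ_eq_prod_range (fun k => h k)]
  · induction i using Fin.lastCases with
    | last =>
      obtain ⟨j, rfl⟩ := Fin.exists_castSucc_eq.mpr hij.symm
      simpa using map_skipFamily_mul_of_ne L horth hij
    | cast i =>
      simpa [mul_comm] using map_skipFamily_mul_of_ne L horth hij.symm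

end Orthogonal

section Hankel

variable {R : Type*} [CommRing R] (μ : ℕ → R) {P : ℕ → R[X]} {h : ℕ → R}
  (hmonic : ∀ n, (P n).Monic) (hdeg : ∀ n, (P n).natDegree = n)
  (horth : ∀ i j, momentFunctional μ (P i * P j) = if i = j then h i else 0)
include hmonic hdeg horth

theorem det_hankel_eq_prod (n : ℕ) :
    (hankel μ (Fin.val : Fin n → ℕ) Fin.val).det = ∏ k ∈ range n, h k := by
  rw [← gram_momentFunctional_X_pow]
  exact det_gram_X_pow _ hmonic hdeg horth n

theorem det_hankel_sylvester (m : ℕ) :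
    (hankel μ (skipExps m) (skipExps m)).det
          * (hankel μ (Fin.val : Fin (m + 1) → ℕ) Fin.val).det
        - (hankel μ (skipExps m) Fin.val).det ^ 2
      = (hankel μ (Fin.val : Fin (m + 2) → ℕ) Fin.val).det
          * (hankel μ (Fin.val : Fin m → ℕ) Fin.val).det := by
  simp only [det_hankel_eq_prod μ hmonic hdeg horth]
  simp only [← gram_momentFunctional_X_pow, det_gram_skipExps_skipExps _ hmonic hdeg horth,
    det_gram_skipExps_X_pow _ hmonic hdeg horth, prod_range_succ]
  ring

end Hankel

section Derivative

variable {R : Type*} {ι : Type*}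

lemma hankel_transpose (μ : ℕ → R) (r c : ι → ℕ) :
    (hankel μ r c)ᵀ = hankel μ c r := by
  ext i j
  simp [hankel, add_comm]

lemma hankel_update_eq_updateCol [DecidableEq ι] (μ : ℕ → R) (r c : ι → ℕ) (p : ι)
    (k : ℕ) :
    hankel μ r (Function.update c p k) = (hankel μ r c).updateCol p fun i => μ (r i + k) := by
  ext i j
  by_cases hj : j = p
  · subst hj; simp [hankel]
  · simp [hankel, hj]

lemma sum_det_hankel_update_val [CommRing R] (μ : ℕ → R) {m : ℕ} (r : Fin (m + 1) → ℕ) :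
    ∑ p : Fin (m + 1), (hankel μ r (Function.update Fin.val p (p + 1))).det
      = (hankel μ r (skipExps m)).det := by
  refine (Finset.sum_eq_single (Fin.last m) (fun p _ hp => ?_) (by simp)).trans rfl
  obtain ⟨q, rfl⟩ := Fin.exists_castSucc_eq.mpr hp
  have hq : q.castSucc ≠ q.succ := Fin.castSucc_lt_succ.ne
  refine det_zero_of_column_eq hq fun i => ?_
  simp [hankel, Function.update_of_ne hq.symm]

variable {𝕜 : Type*} [NontriviallyNormedField 𝕜]

theorem hasDerivAt_det [Fintype ι] [DecidableEq ι] {M : 𝕜 → Matrix ι ι 𝕜}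
    {M' : Matrix ι ι 𝕜} {t : 𝕜} (hM : ∀ i j, HasDerivAt (fun s => M s i j) (M' i j) t) :
    HasDerivAt (fun s => (M s).det) (∑ j, ((M t).updateCol j fun i => M' i j).det) t := by
  simp_rw [det_apply']
  have hterm (σ : Equiv.Perm ι) :
      HasDerivAt (fun s => (Equiv.Perm.sign σ : 𝕜) * ∏ i, M s (σ i) i)
        ((Equiv.Perm.sign σ : 𝕜) * ∑ j, (∏ i ∈ univ.erase j, M t (σ i) i) * M' (σ j) j)
        t := by
    simpa using
      (HasDerivAt.fun_finsetProd fun i _ => hM (σ i) i).const_mul (Equiv.Perm.sign σ : 𝕜)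
  refine (HasDerivAt.fun_sum fun σ _ => hterm σ).congr_deriv ?_
  rw [Finset.sum_comm]
  refine Finset.sum_congr rfl fun σ _ => ?_
  rw [Finset.mul_sum]
  refine Finset.sum_congr rfl fun j _ => ?_
  rw [← Finset.mul_prod_erase univ _ (mem_univ j)]
  simp only [updateCol_self]
  rw [Finset.prod_congr rfl fun i hi => updateCol_ne (ne_of_mem_erase hi)]
  ring

theorem hasDerivAt_det_hankel [Fintype ι] [DecidableEq ι] {μ : ℕ → 𝕜 → 𝕜} {t : 𝕜}
    (hμ : ∀ k, HasDerivAt (μ k) (-μ (k + 1) t) t) (r c : ι → ℕ) :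
    HasDerivAt (fun s => (hankel (μ · s) r c).det)
      (-∑ p, (hankel (μ · t) r (Function.update c p (c p + 1))).det) t := by
  refine (hasDerivAt_det fun i j => hμ (r i + c j)).congr_deriv ?_
  rw [← Finset.sum_neg_distrib]
  refine Finset.sum_congr rfl fun p _ => ?_
  have hcol :
      (fun i => -μ (r i + c p + 1) t) = (-1 : 𝕜) • fun i => μ (r i + (c p + 1)) t := by
    ext i
    simp [add_assoc]
  rw [hankel_update_eq_updateCol, ← neg_one_mul, ← det_updateCol_smul, ← hcol]
  rfl

theorem deriv_deriv_log_det_hankel {μ : ℕ → ℝ → ℝ}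
    (hμ : ∀ k s, HasDerivAt (μ k) (-μ (k + 1) s) s)
    {m : ℕ} (hD : ∀ s, (hankel (μ · s) (Fin.val : Fin (m + 1) → ℕ) Fin.val).det ≠ 0)
    (t : ℝ) :
    deriv (deriv fun s => Real.log (hankel (μ · s) (Fin.val : Fin (m + 1) → ℕ) Fin.val).det) t
      = ((hankel (μ · t) (skipExps m) (skipExps m)).det
            * (hankel (μ · t) (Fin.val : Fin (m + 1) → ℕ) Fin.val).det
          - (hankel (μ · t) (skipExps m) Fin.val).det ^ 2)
        / (hankel (μ · t) (Fin.val : Fin (m + 1) → ℕ) Fin.val).det ^ 2 := by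
  set D := fun s => (hankel (μ · s) (Fin.val : Fin (m + 1) → ℕ) Fin.val).det
  set Δ := fun s => (hankel (μ · s) (skipExps m) Fin.val).det
  set K := fun s => (hankel (μ · s) (skipExps m) (skipExps m)).det
  have hD' (s : ℝ) : HasDerivAt D (-Δ s) s := by
    have := hasDerivAt_det_hankel (fun k => hμ k s) (Fin.val : Fin (m + 1) → ℕ) Fin.val
    rwa [sum_det_hankel_update_val, ← det_transpose, hankel_transpose] at this
  have hΔ' (s : ℝ) : HasDerivAt Δ (-K s) s := by
    have := hasDerivAt_det_hankel (fun k => hμ k s) (skipExps m) Fin.val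
    rwa [sum_det_hankel_update_val] at this
  have hlog : deriv (fun s => Real.log (D s)) = fun s => -Δ s / D s :=
    funext fun s => ((hD' s).log (hD s)).deriv
  rw [hlog, ((hΔ' t).fun_neg.fun_div (hD' t) (hD t)).deriv]
  ring

end Derivative

section Integral

theorem integral_eval_mul_eq_momentFunctional {ω : ℝ → ℝ} {a b : ℝ}
    (hω : ∀ k, IntervalIntegrable (fun x => x ^ k * ω x) volume a b) (p : ℝ[X]) :
    ∫ x in a..b, p.eval x * ω x = momentFunctional (fun k => ∫ x in a..b, x ^ k * ω x) p := by
  simp_rw [momentFunctional_apply, eval_eq_sum_range, Finset.sum_mul, mul_assoc]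
  rw [integral_finsetSum fun k _ => (hω k).const_mul _]
  simp_rw [intervalIntegral.integral_const_mul]

theorem hasDerivAt_integral_mul_exp_neg_mul {g : ℝ → ℝ} {a b : ℝ} (hab : a ≤ b)
    (hg : ContinuousOn g (Set.Icc a b)) (t : ℝ) :
    HasDerivAt (fun s => ∫ x in a..b, g x * Real.exp (-s * x))
      (∫ x in a..b, g x * (-x * Real.exp (-t * x))) t := by
  set F' : ℝ × ℝ → ℝ := fun q => g q.2 * (-q.2 * Real.exp (-q.1 * q.2))
  obtain ⟨C, hC⟩ := ((isCompact_closedBall t 1).prod isCompact_Icc).exists_bound_of_continuousOn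
    (f := F') ((hg.comp continuousOn_snd fun q hq => hq.2).mul (by fun_prop))
  have hint (f : ℝ → ℝ) (hf : Continuous f) :
      IntervalIntegrable (fun x => g x * f x) volume a b :=
    (hg.mul hf.continuousOn).intervalIntegrable_of_Icc hab
  refine (hasDerivAt_integral_of_dominated_loc_of_deriv_le (bound := fun _ => C)
    (Metric.ball_mem_nhds t one_pos)
    (Filter.Eventually.of_forall fun s => (hint _ (by fun_prop)).def'.aestronglyMeasurable)
    (hint _ (by fun_prop)) (hint _ (by fun_prop)).def'.aestronglyMeasurable
    (Filter.Eventually.of_forall fun x hx s hs =>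
      hC (s, x) ⟨Metric.ball_subset_closedBall hs, ?_⟩)
    intervalIntegrable_const
    (Filter.Eventually.of_forall fun x _ s _ => ?_)).2
  · rw [Set.uIoc_of_le hab] at hx
    exact Set.Ioc_subset_Icc_self hx
  · have := ((hasDerivAt_id s).neg.mul_const x).exp.const_mul (g x)
    simpa [F', mul_comm, mul_left_comm, mul_assoc] using this

theorem hasDerivAt_moment {w : ℝ → ℝ} {a b : ℝ} (hab : a ≤ b)
    (hw : ContinuousOn w (Set.Icc a b)) {μ : ℕ → ℝ → ℝ}
    (hμ : ∀ k t, μ k t = ∫ x in a..b, x ^ k * w x * Real.exp (-t * x))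
    (k : ℕ) (t : ℝ) : HasDerivAt (μ k) (-μ (k + 1) t) t := by
  rw [funext (hμ k), hμ, ← intervalIntegral.integral_neg]
  refine (hasDerivAt_integral_mul_exp_neg_mul (g := fun x => x ^ k * w x) hab
    ((continuousOn_pow k).mul hw) t).congr_deriv (integral_congr fun x _ => ?_)
  ring

theorem momentFunctional_mul_eq_integral {w : ℝ → ℝ} {a b : ℝ} (hab : a ≤ b)
    (hw : ContinuousOn w (Set.Icc a b)) {μ : ℕ → ℝ → ℝ}
    (hμ : ∀ k t, μ k t = ∫ x in a..b, x ^ k * w x * Real.exp (-t * x))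
    (t : ℝ) (p q : ℝ[X]) :
    momentFunctional (μ · t) (p * q)
      = ∫ x in a..b, p.eval x * q.eval x * w x * Real.exp (-t * x) := by
  have hint (k : ℕ) :
      IntervalIntegrable (fun x => x ^ k * (w x * Real.exp (-t * x))) volume a b :=
    ((continuousOn_pow k).mul (hw.mul (by fun_prop))).intervalIntegrable_of_Icc hab
  have hμt : (μ · t) = fun k => ∫ x in a..b, x ^ k * (w x * Real.exp (-t * x)) :=
    funext fun k => by simp only [hμ, mul_assoc]
  rw [hμt, ← integral_eval_mul_eq_momentFunctional hint]
  simp only [eval_mul, mul_assoc]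

end Integral

end Toda

theorem toda_molecule_general (w₀ : ℝ → ℝ) (hw₀ : ContinuousOn w₀ (Set.Icc (-1) 1))
    (μ : ℕ → ℝ → ℝ)
    (hμ : ∀ i t, μ i t = ∫ x in (-1:ℝ)..1, x ^ i * w₀ x * Real.exp (-t * x))
    (D : ℕ → ℝ → ℝ)
    (hD : ∀ n t, D n t = (Matrix.of fun i j : Fin n => μ (i + j) t).det)
    (P : ℕ → ℝ → Polynomial ℝ)
    (hmonic : ∀ n t, (P n t).Monic) (hdeg : ∀ n t, (P n t).natDegree = n)
    (h : ℕ → ℝ → ℝ)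
    (horth : ∀ i j t, (∫ x in (-1:ℝ)..1,
        (P i t).eval x * (P j t).eval x * w₀ x * Real.exp (-t * x)) =
      if i = j then h i t else 0)
    (hpos : ∀ n t, 0 < h n t)
    (b : ℕ → ℝ → ℝ)
    (hb : ∀ (n : ℕ) (t : ℝ), 1 ≤ n → b n t = h n t / h (n - 1) t) :
    ∀ (n : ℕ) (t : ℝ), 1 ≤ n →
      deriv (deriv (fun s => Real.log (D n s))) t = b n t ∧
      b n t = D (n + 1) t * D (n - 1) t / (D n t) ^ 2 := by
  intro n t hn
  obtain ⟨m, rfl⟩ : ∃ m, n = m + 1 := ⟨n - 1, by omega⟩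
  have horthμ (s : ℝ) (i j : ℕ) :=
    (Toda.momentFunctional_mul_eq_integral (by norm_num) hw₀ hμ s (P i s) (P j s)).trans
      (horth i j s)
  have hDhankel (N : ℕ) (s : ℝ) :
      D N s = (Toda.hankel (μ · s) (Fin.val : Fin N → ℕ) Fin.val).det :=
    hD N s
  have hDprod (N : ℕ) (s : ℝ) : D N s = ∏ k ∈ range N, h k s :=
    (hDhankel N s).trans (Toda.det_hankel_eq_prod _ (hmonic · s) (hdeg · s) (horthμ s) N)
  have hbD : b (m + 1) t = D (m + 1 + 1) t * D (m + 1 - 1) t / D (m + 1) t ^ 2 := by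
    have hm := hpos m t
    have hprod : 0 < ∏ k ∈ range m, h k t := prod_pos fun k _ => hpos k t
    rw [hb _ _ hn, hDprod, hDprod, hDprod, prod_range_succ, prod_range_succ, Nat.add_sub_cancel]
    field_simp
  have hDne (s : ℝ) :
      (Toda.hankel (μ · s) (Fin.val : Fin (m + 1) → ℕ) Fin.val).det ≠ 0 := by
    rw [← hDhankel, hDprod]
    exact (prod_pos fun k _ => hpos k s).ne'
  refine ⟨?_, hbD⟩
  rw [hbD, funext (hDhankel (m + 1)),
    Toda.deriv_deriv_log_det_hankel (Toda.hasDerivAt_moment (by norm_num) hw₀ hμ) hDne,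
    Toda.det_hankel_sylvester _ (hmonic · t) (hdeg · t) (horthμ t), hDhankel, hDhankel]
  rfl

/-- the Toda molecule equation
`(d²/dt²) log D_n(t) = β_n(t) = D_{n+1}(t) D_{n-1}(t) / D_n(t)²` for `n ≥ 1`. -/
theorem toda_molecule (w₀ : ℝ → ℝ) (hw₀ : ContinuousOn w₀ (Set.Icc (-1) 1))
    (hw₀pos : ∀ x ∈ Set.Icc (-1:ℝ) 1, 0 < w₀ x)
    (μ : ℕ → ℝ → ℝ)
    (hμ : ∀ i t, μ i t = ∫ x in (-1:ℝ)..1, x ^ i * w₀ x * Real.exp (-t * x))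
    (D : ℕ → ℝ → ℝ)
    (hD : ∀ n t, D n t = (Matrix.of fun i j : Fin n => μ (i + j) t).det)
    (P : ℕ → ℝ → Polynomial ℝ)
    (hmonic : ∀ n t, (P n t).Monic) (hdeg : ∀ n t, (P n t).natDegree = n)
    (h : ℕ → ℝ → ℝ)
    (horth : ∀ i j t, (∫ x in (-1:ℝ)..1,
        (P i t).eval x * (P j t).eval x * w₀ x * Real.exp (-t * x)) =
      if i = j then h i t else 0)
    (hpos : ∀ n t, 0 < h n t)
    (b : ℕ → ℝ → ℝ)
    (hb : ∀ (n : ℕ) (t : ℝ), 1 ≤ n → b n t = h n t / h (n - 1) t) :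
    ∀ (n : ℕ) (t : ℝ), 1 ≤ n →
      deriv (deriv (fun s => Real.log (D n s))) t = b n t ∧
      b n t = D (n + 1) t * D (n - 1) t / (D n t) ^ 2 :=
  toda_molecule_general w₀ hw₀ μ hμ D hD P hmonic hdeg h horth hpos b hb
end

section
/- Define y(t) = 1 + t/R_n(t) where R_n solves the coupled Riccati system t R_n' = αt + (2n+1+α+β-2t) R_n - 2R_n² + 2 t r_n and -r_n' = [R_n/(t(t+R_n))][n(n+β) - (2n+α+β) r_n - (t/R_n)(r_n²+αr_n)] - (r_n²+αr_n)/R_n. Then y satisfies y'' = ((3y-1)/(2y(y-1))) (y')² - y'/t + 2(2n+1+α+β) y/t - 2y(y+1)/(y-1) + ((y-1)²/t²)[(α²/2) y - (β²/2)/y]. -/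
set_option maxHeartbeats 4000000 in
/-- if `R_n, r_n` solve the coupled Riccati system, then
`y = 1 + t/R_n(t)` satisfies the Painlevé V-type equation. -/
theorem painleve_V (α β : ℝ) (n : ℕ) (hn : 1 ≤ n) (s : Set ℝ) (hs : IsOpen s)
    (R r y : ℝ → ℝ)
    (hR : ContDiff ℝ (⊤ : ℕ∞) R) (hr : ContDiff ℝ (⊤ : ℕ∞) r)
    (hy : ∀ t, y t = 1 + t / R t)
    (hcond : ∀ t ∈ s, t ≠ 0 ∧ R t ≠ 0 ∧ t + R t ≠ 0 ∧ y t ≠ 0 ∧ y t ≠ 1)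
    (hric1 : ∀ t ∈ s, t * deriv R t =
      α * t + (2 * n + 1 + α + β - 2 * t) * R t - 2 * (R t) ^ 2 + 2 * t * r t)
    (hric2 : ∀ t ∈ s, -deriv r t =
      (R t / (t * (t + R t))) *
        (n * (n + β) - (2 * n + α + β) * r t - (t / R t) * ((r t) ^ 2 + α * r t))
      - ((r t) ^ 2 + α * r t) / R t) :
    ∀ t ∈ s, deriv (deriv y) t =
      ((3 * y t - 1) / (2 * y t * (y t - 1))) * (deriv y t) ^ 2 - deriv y t / t
      + 2 * (2 * n + 1 + α + β) * y t / t - 2 * y t * (y t + 1) / (y t - 1)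
      + ((y t - 1) ^ 2 / t ^ 2) * ((α ^ 2 / 2) * y t - (β ^ 2 / 2) / y t) := by
  have hRdiff : Differentiable ℝ R := hR.differentiable (by simp)
  have hrdiff : Differentiable ℝ r := hr.differentiable (by simp)
  have hR'diff : Differentiable ℝ (deriv R) :=
    (contDiff_infty_iff_deriv.mp (hR.of_le (by simp))).2.differentiable (by norm_num)
  -- first derivative of y wherever R ≠ 0
  have hdy : ∀ x, R x ≠ 0 → deriv y x = (1 * R x - x * deriv R x) / (R x) ^ 2 := by
    intro x hx
    have h1 : HasDerivAt (fun u => 1 + u / R u)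
        (0 + (1 * R x - x * deriv R x) / (R x) ^ 2) x :=
      (hasDerivAt_const x (1:ℝ)).add ((hasDerivAt_id x).div (hRdiff x).hasDerivAt hx)
    have hyfun : y = fun u => 1 + u / R u := funext hy
    rw [hyfun]
    simpa using h1.deriv
  intro t hts
  obtain ⟨ht0, hRt, htR, hy0, hy1⟩ := hcond t hts
  -- E is the RHS of the first Riccati equation
  set E : ℝ → ℝ := fun x =>
    α * x + (2 * n + 1 + α + β - 2 * x) * R x - 2 * (R x) ^ 2 + 2 * x * r x with hE
  -- derivative of E at t
  have hEd : HasDerivAt E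
      (α * 1 + ((0 - 2 * 1) * R t + (2 * n + 1 + α + β - 2 * t) * deriv R t)
        - 2 * (↑2 * R t ^ (2 - 1) * deriv R t) + (2 * 1 * r t + 2 * t * deriv r t)) t := by
    exact ((((hasDerivAt_id t).const_mul α).add
        (((hasDerivAt_const t (2 * n + 1 + α + β)).sub
          ((hasDerivAt_id t).const_mul 2)).mul (hRdiff t).hasDerivAt)).sub
        (((hRdiff t).hasDerivAt.pow 2).const_mul 2)).add
        (((hasDerivAt_id t).const_mul 2).mul (hrdiff t).hasDerivAt)
  -- deriv R agrees with E x / x near t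
  have hevR : deriv R =ᶠ[nhds t] fun x => E x / x := by
    have hVopen : IsOpen (s ∩ {x : ℝ | x ≠ 0}) := hs.inter isOpen_ne
    refine Filter.eventuallyEq_of_mem (hVopen.mem_nhds ⟨hts, ht0⟩) ?_
    intro x hx
    have hx0 : x ≠ 0 := hx.2
    show deriv R x = E x / x
    rw [hE, eq_div_iff hx0, mul_comm]
    exact hric1 x hx.1
  have h3 : deriv (deriv R) t =
      ((α * 1 + ((0 - 2 * 1) * R t + (2 * n + 1 + α + β - 2 * t) * deriv R t)
        - 2 * (↑2 * R t ^ (2 - 1) * deriv R t) + (2 * 1 * r t + 2 * t * deriv r t)) * t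
        - E t * 1) / t ^ 2 := by
    rw [hevR.deriv_eq]
    exact (hEd.div (hasDerivAt_id t) ht0).deriv
  -- deriv y agrees with the explicit formula near t
  have hev : deriv y =ᶠ[nhds t] fun x => (1 * R x - x * deriv R x) / (R x) ^ 2 := by
    have hUopen : IsOpen {x : ℝ | R x ≠ 0} := isOpen_ne.preimage hR.continuous
    exact Filter.eventuallyEq_of_mem (hUopen.mem_nhds hRt) fun x hx => hdy x hx
  have h2 : deriv (deriv y) t =
      ((1 * deriv R t - (1 * deriv R t + t * deriv (deriv R) t)) * (R t) ^ 2
        - (1 * R t - t * deriv R t) * (↑2 * R t ^ (2 - 1) * deriv R t)) / ((R t) ^ 2) ^ 2 := by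
    rw [hev.deriv_eq]
    exact ((((hRdiff t).hasDerivAt.const_mul 1).sub
        ((hasDerivAt_id t).mul (hR'diff t).hasDerivAt)).div
        ((hRdiff t).hasDerivAt.pow 2) (pow_ne_zero 2 hRt)).deriv
  -- explicit values from the Riccati system
  have hR1 : deriv R t = E t / t := by
    rw [eq_div_iff ht0, mul_comm]; exact hric1 t hts
  have hr1 : deriv r t =
      -((R t / (t * (t + R t))) *
        (n * (n + β) - (2 * n + α + β) * r t - (t / R t) * ((r t) ^ 2 + α * r t))
      - ((r t) ^ 2 + α * r t) / R t) := by
    have := hric2 t hts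
    linarith [this]
  have htR' : t + R t ≠ 0 := htR
  have hyt : y t = 1 + t / R t := hy t
  rw [h2, h3, hdy t hRt, hr1, hR1, hyt, hE]
  have hy0' : (1 : ℝ) + t / R t ≠ 0 := by rwa [hyt] at hy0
  have hy1' : t / R t ≠ 0 := div_ne_zero ht0 hRt
  have hA : t * R t ^ 6 * 2 + t ^ 2 * R t ^ 5 * 2 ≠ 0 := by
    have : t * R t ^ 6 * 2 + t ^ 2 * R t ^ 5 * 2 = 2 * t * R t ^ 5 * (t + R t) := by ring
    rw [this]
    exact mul_ne_zero (mul_ne_zero (mul_ne_zero two_ne_zero ht0) (pow_ne_zero 5 hRt)) htR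
  have hB : t * 2 + R t * 2 ≠ 0 := by
    have : t * 2 + R t * 2 = 2 * (t + R t) := by ring
    rw [this]
    exact mul_ne_zero two_ne_zero htR
  have htR2 : R t + t ≠ 0 := by rwa [add_comm]
  field_simp [hA, hB, htR2, ht0, hRt, htR]
  ring
end

section
/- Let A = (a_{j-k} - a_{j+k+2})_{j,k≥0} where a_n = a_{-n}, and set a_k^+ = 2a_k - a_{k-1} - a_{k+1}, A^+ = (a^+_{j-k} + a^+_{j+k+1})_{j,k≥0}. Let D_+ be the lower bidiagonal infinite matrix with 1 on the diagonal and -1 on the subdiagonal. Then D_+ A D_+^T = A^+ (entrywise equality of infinite matrices). -/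
/-!
Extend `A` to all integer indices by the same formula `A j k = a (j - k) - a (j + k + 2)`.
Multiplying by `D₊` on the left (right) takes backward differences in the row (column) index,
and the entries those differences read outside the quadrant vanish by themselves: the column
`k = -1` because `a (j + 1) - a (j + 1) = 0`, the row `j = -1` because `a` is even. So
`D₊ A D₊ᵀ` is the mixed second difference of the extended `A`, which expands to `A⁺`.
-/

/-- `D₊ = T(1 - z)`. -/
def backwardDiffMatrix {R : Type*} [Ring R] (j k : ℕ) : R :=
  if j = k then 1 else if (j : ℤ) = k + 1 then -1 else 0

section BackwardDiff

variable {R : Type*} [Ring R]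

theorem backwardDiffMatrix_of_ne {j k : ℕ} (h₁ : j ≠ k) (h₂ : (j : ℤ) ≠ k + 1) :
    (backwardDiffMatrix j k : R) = 0 := by
  rw [backwardDiffMatrix, if_neg h₁, if_neg h₂]

variable [TopologicalSpace R]

theorem tsum_backwardDiffMatrix_mul (g : ℤ → R) (hg : g (-1) = 0) (j : ℕ) :
    ∑' i : ℕ, backwardDiffMatrix j i * g i = g j - g (j - 1) := by
  rcases j with _ | p
  · rw [tsum_eq_single 0 fun i hi => by
      rw [backwardDiffMatrix_of_ne (by omega) (by omega), zero_mul]]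
    simp [backwardDiffMatrix, hg]
  · rw [tsum_eq_sum (s := {p, p + 1}) fun i hi => by
      simp only [Finset.mem_insert, Finset.mem_singleton, not_or] at hi
      rw [backwardDiffMatrix_of_ne (by omega) (by omega), zero_mul],
      Finset.sum_pair (by omega)]
    simp [backwardDiffMatrix, sub_eq_neg_add]

theorem tsum_mul_backwardDiffMatrix (g : ℤ → R) (hg : g (-1) = 0) (k : ℕ) :
    ∑' l : ℕ, g l * backwardDiffMatrix k l = g k - g (k - 1) := by
  rcases k with _ | q
  · rw [tsum_eq_single 0 fun l hl => by
      rw [backwardDiffMatrix_of_ne (by omega) (by omega), mul_zero]]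
    simp [backwardDiffMatrix, hg]
  · rw [tsum_eq_sum (s := {q, q + 1}) fun l hl => by
      simp only [Finset.mem_insert, Finset.mem_singleton, not_or] at hl
      rw [backwardDiffMatrix_of_ne (by omega) (by omega), mul_zero],
      Finset.sum_pair (by omega)]
    simp [backwardDiffMatrix, sub_eq_neg_add]

end BackwardDiff

section ToeplitzMinusHankel

variable {R : Type*} [CommRing R]

def toeplitzMinusHankel (a : ℤ → R) (j k : ℤ) : R :=
  a (j - k) - a (j + k + 2)

theorem toeplitzMinusHankel_neg_one_left {a : ℤ → R} (heven : ∀ n, a n = a (-n)) (k : ℤ) :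
    toeplitzMinusHankel a (-1) k = 0 := by
  rw [toeplitzMinusHankel, heven (-1 - k), sub_eq_zero]
  ring_nf

theorem toeplitzMinusHankel_neg_one_right (a : ℤ → R) (j : ℤ) :
    toeplitzMinusHankel a j (-1) = 0 := by
  rw [toeplitzMinusHankel, sub_eq_zero]
  ring_nf

theorem toeplitzMinusHankel_mixed_diff {a ap : ℤ → R}
    (hap : ∀ k, ap k = 2 * a k - a (k - 1) - a (k + 1)) (j k : ℤ) :
    toeplitzMinusHankel a j k - toeplitzMinusHankel a j (k - 1)
      - (toeplitzMinusHankel a (j - 1) k - toeplitzMinusHankel a (j - 1) (k - 1))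
      = ap (j - k) + ap (j + k + 1) := by
  simp only [toeplitzMinusHankel, hap]
  ring_nf

end ToeplitzMinusHankel

/-- `D₊ A D₊ᵀ = A⁺`, where `A = (a_{j-k} - a_{j+k+2})`,
`a⁺_k = 2a_k - a_{k-1} - a_{k+1}`, `A⁺ = (a⁺_{j-k} + a⁺_{j+k+1})`, and `D₊ = T(1-z)`. -/
theorem Dplus_A_Dplus (a ap : ℤ → ℂ) (heven : ∀ n : ℤ, a n = a (-n))
    (hap : ∀ k : ℤ, ap k = 2 * a k - a (k - 1) - a (k + 1))
    (A Ap : ℕ → ℕ → ℂ) (Dp : ℕ → ℕ → ℂ)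
    (hA : ∀ j k : ℕ, A j k = a ((j : ℤ) - k) - a ((j : ℤ) + k + 2))
    (hAp : ∀ j k : ℕ, Ap j k = ap ((j : ℤ) - k) + ap ((j : ℤ) + k + 1))
    (hDp : ∀ j k : ℕ, Dp j k = if j = k then 1 else if (j : ℤ) = k + 1 then -1 else 0) :
    ∀ j k : ℕ, (∑' i : ℕ, ∑' l : ℕ, Dp j i * A i l * Dp k l) = Ap j k := by
  intro j k
  obtain rfl : Dp = backwardDiffMatrix := funext₂ hDp
  obtain rfl : A = fun (i l : ℕ) => toeplitzMinusHankel a i l := funext₂ hA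
  set T := toeplitzMinusHankel a
  have hcols (i : ℕ) : ∑' l : ℕ, backwardDiffMatrix j i * T i l * backwardDiffMatrix k l
      = backwardDiffMatrix j i * (T i k - T i (k - 1)) := by
    rw [tsum_mul_backwardDiffMatrix (fun l => backwardDiffMatrix j i * T i l)
      (by simp [T, toeplitzMinusHankel_neg_one_right]), mul_sub]
  rw [tsum_congr hcols, tsum_backwardDiffMatrix_mul (fun i => T i k - T i (k - 1))
    (by simp [T, toeplitzMinusHankel_neg_one_left heven]), toeplitzMinusHankel_mixed_diff hap,
    hAp]
end

section
/- Let A^+ = (a^+_{j-k} + a^+_{j+k+1})_{j,k≥0} with a^+_n = a^+_{-n}, and set a_k^# = 2a^+_k + a^+_{k-1} + a^+_{k+1}, A^# = (a^#_{j-k} + a^#_{j+k})_{j,k≥0}. Let D_- be the lower bidiagonal infinite matrix with 1 on both the diagonal and subdiagonal, and R = diag(1/2, 1, 1, ...). Then D_- A^+ D_-^T = R A^# R. -/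
/-!
Extend the entries of `A⁺` to all integer indices by `K(j, k) = a⁺_{j-k} + a⁺_{j+k+1}`. Then the
sum of the four entries `K(j-1, k-1) + K(j-1, k) + K(j, k-1) + K(j, k)` regroups, with no assumption
on `a⁺`, into `a^#_{j-k} + a^#_{j+k}`; this is `D₋ A⁺ D₋ᵀ` away from the first row and column.
Evenness of `a⁺` gives the reflection `K(-1, k) = K(0, k)` (and likewise in `k`), so the single
surviving term in row or column `0` is half of the four-term sum: that is the factor `1/2` of `R`.
-/

open Matrix

section Bidiagonal

variable {α : Type*} [Semiring α] [TopologicalSpace α]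

/-- `D₋ = T(1 + z)`. -/
def lowerBidiag (j k : ℕ) : α :=
  if j = k ∨ j = k + 1 then 1 else 0

theorem tsum_lowerBidiag_zero_mul (f : ℕ → α) :
    ∑' i, lowerBidiag 0 i * f i = f 0 :=
  (tsum_eq_single 0 fun i hi => by simp [lowerBidiag, Ne.symm hi]).trans (by simp [lowerBidiag])

theorem tsum_lowerBidiag_succ_mul (a : ℕ) (f : ℕ → α) :
    ∑' i, lowerBidiag (a + 1) i * f i = f a + f (a + 1) := by
  rw [tsum_eq_sum (s := {a, a + 1}) fun i hi => ?_, Finset.sum_pair (by omega)]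
  · simp [lowerBidiag]
  · simp only [Finset.mem_insert, Finset.mem_singleton, not_or] at hi
    simp only [lowerBidiag]
    rw [if_neg (by omega), zero_mul]

theorem tsum_tsum_diagonal_mul_mul {ι : Type*} [DecidableEq ι] (d e : ι → α) (M : Matrix ι ι α)
    (j k : ι) :
    ∑' i, ∑' l, diagonal d j i * M i l * diagonal e l k = d j * M j k * e k := by
  rw [tsum_eq_single j fun i hi => by simp [diagonal_apply_ne _ (Ne.symm hi)],
    tsum_eq_single k fun l hl => by simp [diagonal_apply_ne _ hl]]
  simp

end Bidiagonal

/-- The diagonal of `R = diag(1/2, 1, 1, …)`. -/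
noncomputable def boundaryWeight (j : ℕ) : ℂ :=
  if j = 0 then 1 / 2 else 1

theorem tsum_lowerBidiag_mul_of_reflect (g : ℤ → ℂ) (hg : g (-1) = g 0) (j : ℕ) :
    ∑' i : ℕ, lowerBidiag j i * g i = boundaryWeight j * (g (j - 1) + g j) := by
  rcases j with _ | a
  · rw [tsum_lowerBidiag_zero_mul]
    simp only [boundaryWeight, Nat.cast_zero, zero_sub, hg, if_true]
    ring
  · rw [tsum_lowerBidiag_succ_mul]
    simp [boundaryWeight]

section Kernel

variable {α : Type*} [CommSemiring α] (a : ℤ → α)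

/-- `A⁺` with its entries continued to all integer indices. -/
def plusKernel (j k : ℤ) : α :=
  a (j - k) + a (j + k + 1)

def sharpSeq (k : ℤ) : α :=
  2 * a k + a (k - 1) + a (k + 1)

theorem plusKernel_four_sum (j k : ℤ) :
    plusKernel a (j - 1) (k - 1) + plusKernel a (j - 1) k + plusKernel a j (k - 1) +
        plusKernel a j k =
      sharpSeq a (j - k) + sharpSeq a (j + k) := by
  simp only [plusKernel, sharpSeq]
  ring_nf

variable {a}

theorem plusKernel_neg_one_left (heven : ∀ n, a n = a (-n)) (k : ℤ) :
    plusKernel a (-1) k = plusKernel a 0 k := by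
  simp only [plusKernel]
  rw [heven (-1 - k), heven (0 - k)]
  ring_nf

theorem plusKernel_neg_one_right (heven : ∀ n, a n = a (-n)) (j : ℤ) :
    plusKernel a j (-1) = plusKernel a j 0 := by
  simp only [plusKernel]
  rw [heven (j + -1 + 1), heven (j - 0)]
  ring_nf

end Kernel

/-- `D₋ A⁺ D₋ᵀ = R A^# R`, where `A⁺ = (a⁺_{j-k} + a⁺_{j+k+1})`,
`a^#_k = 2a⁺_k + a⁺_{k-1} + a⁺_{k+1}`, `A^# = (a^#_{j-k} + a^#_{j+k})`,
`D₋ = T(1+z)` and `R = diag(1/2, 1, 1, …)`. -/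
theorem Dminus_Aplus_Dminus (ap ash : ℤ → ℂ) (heven : ∀ n : ℤ, ap n = ap (-n))
    (hash : ∀ k : ℤ, ash k = 2 * ap k + ap (k - 1) + ap (k + 1))
    (Ap Ash : ℕ → ℕ → ℂ) (Dm R : ℕ → ℕ → ℂ)
    (hAp : ∀ j k : ℕ, Ap j k = ap ((j : ℤ) - k) + ap ((j : ℤ) + k + 1))
    (hAsh : ∀ j k : ℕ, Ash j k = ash ((j : ℤ) - k) + ash ((j : ℤ) + k))
    (hDm : ∀ j k : ℕ, Dm j k = if j = k then 1 else if (j : ℤ) = k + 1 then 1 else 0)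
    (hR : ∀ j k : ℕ, R j k = if j = k then (if j = 0 then (1 : ℂ) / 2 else 1) else 0) :
    ∀ j k : ℕ, (∑' i : ℕ, ∑' l : ℕ, Dm j i * Ap i l * Dm k l) =
      ∑' i : ℕ, ∑' l : ℕ, R j i * Ash i l * R l k := by
  intro j k
  obtain rfl : Dm = lowerBidiag := funext₂ fun i l => by
    rw [hDm, lowerBidiag]
    split_ifs <;> first | rfl | omega
  obtain rfl : R = diagonal boundaryWeight := funext₂ fun i l => by
    rw [hR, diagonal_apply, boundaryWeight]
  obtain rfl : ash = sharpSeq ap := funext hash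
  have hrow (i : ℕ) : ∑' l, lowerBidiag j i * Ap i l * lowerBidiag k l =
      lowerBidiag j i * (boundaryWeight k * (plusKernel ap i (k - 1) + plusKernel ap i k)) := by
    simp_rw [hAp, mul_assoc, tsum_mul_left, mul_comm (ap _ + _)]
    exact congrArg _ (tsum_lowerBidiag_mul_of_reflect _ (plusKernel_neg_one_right heven i) k)
  calc ∑' i, ∑' l, lowerBidiag j i * Ap i l * lowerBidiag k l
      = boundaryWeight j * (boundaryWeight k * (plusKernel ap (j - 1) (k - 1) +
          plusKernel ap (j - 1) k) + boundaryWeight k * (plusKernel ap j (k - 1) +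
          plusKernel ap j k)) := by
        simp_rw [hrow]
        exact tsum_lowerBidiag_mul_of_reflect
          (fun i => boundaryWeight k * (plusKernel ap i (k - 1) + plusKernel ap i k)) (by
          rw [plusKernel_neg_one_left heven, plusKernel_neg_one_left heven]) j
    _ = boundaryWeight j * Ash j k * boundaryWeight k := by
        rw [hAsh, ← plusKernel_four_sum]
        ring
    _ = _ := (tsum_tsum_diagonal_mul_mul _ _ _ j k).symm
end

section
/- For integers i, l ≥ 0 and s > 0, the number Σ over pairs (u,v) with 0 ≤ u ≤ i, 0 ≤ v ≤ l and s = i - 2u + l - 2v of C(i,u)·C(l,v) equals C(i+l, (i+l-s)/2) if s ≤ i+l and i+l-s is even, and 0 otherwise (Vandermonde-type identity (6.10)). -/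
/-! The constraint `s = i - 2u + l - 2v` says exactly that `i + l - s` is even, nonnegative and
twice `u + v`, so the sum is Vandermonde's convolution `∑_{u+v=k} C(i,u) C(l,v) = C(i+l,k)`
with `k = (i + l - s) / 2`. -/

open Finset

theorem sum_range_ite_add_eq_choose_mul_choose (m n k : ℕ) :
    (∑ u ∈ range (m + 1), ∑ v ∈ range (n + 1),
      if u + v = k then m.choose u * n.choose v else 0) = (m + n).choose k := by
  rw [Nat.add_choose_eq, ← sum_product', ← sum_filter]
  refine sum_subset (fun p hp => by simpa using (mem_filter.1 hp).2) ?_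
  rintro ⟨u, v⟩ huv hp
  obtain hu | hv : m < u ∨ n < v := by
    simp only [mem_filter, mem_product, mem_range, HasAntidiagonal.mem_antidiagonal] at huv hp
    omega
  · simp [Nat.choose_eq_zero_of_lt hu]
  · simp [Nat.choose_eq_zero_of_lt hv]

theorem vandermonde_type_general (i l : ℕ) (s : ℕ) :
    (∑ u ∈ Finset.range (i + 1), ∑ v ∈ Finset.range (l + 1),
        if (s : ℤ) = (i : ℤ) - 2 * u + l - 2 * v then (i.choose u) * (l.choose v) else 0)
      = if s ≤ i + l ∧ (i + l - s) % 2 = 0 then (i + l).choose ((i + l - s) / 2) else 0 := by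
  split_ifs with h
  · rw [← sum_range_ite_add_eq_choose_mul_choose]
    refine sum_congr rfl fun u _ => sum_congr rfl fun v _ => if_congr ?_ rfl rfl
    omega
  · exact sum_eq_zero fun u _ => sum_eq_zero fun v _ => if_neg (by omega)

/-- the Vandermonde-type identity (6.10): for `i, l ≥ 0` and `s > 0`,
`Σ_{0≤u≤i, 0≤v≤l, s = i-2u+l-2v} C(i,u) C(l,v)` equals `C(i+l, (i+l-s)/2)` when
`s ≤ i+l` and `i+l-s` is even, and `0` otherwise. -/
theorem vandermonde_type (i l : ℕ) (s : ℕ) (hs : 0 < s) :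
    (∑ u ∈ Finset.range (i + 1), ∑ v ∈ Finset.range (l + 1),
        if (s : ℤ) = (i : ℤ) - 2 * u + l - 2 * v then (i.choose u) * (l.choose v) else 0)
      = if s ≤ i + l ∧ (i + l - s) % 2 = 0 then (i + l).choose ((i + l - s) / 2) else 0 :=
  vandermonde_type_general i l s
end

section
/- Let {a^#_n} be an even complex sequence and define b_n = (1/2) Σ_{k=0}^n a^#_{n-2k} C(n,k), and the infinite Hankel matrix B = (b_{j+k})_{j,k≥0}. Then B = S_# R A^# R S_#^T, where A^# = (a^#_{j-k} + a^#_{j+k})_{j,k≥0}, R = diag(1/2,1,1,...), and S_# is the lower triangular matrix with (S_#)_{ij} = C(i, (i-j)/2) when i ≥ j and i-j is even, and 0 otherwise. In particular S_# has unit diagonal, so for every n ≥ 1, det H_n[b] = det(b_{j+k})_{j,k=0}^{n-1} = det(S_#,n) · det(R_n A^#_n R_n) · det(S_#,n^T) = (1/4) det( (a^#_{j-k}+a^#_{j+k})_{j,k=0}^{n-1} ). -/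
open Finset


private lemma vander (a : ℤ → ℂ) (j k : ℕ) :
    ∑ m ∈ range (j + k + 1), a ((j:ℤ) + k - 2 * m) * ((j + k).choose m : ℂ)
      = ∑ p ∈ range (j + 1), ∑ q ∈ range (k + 1),
          (j.choose p : ℂ) * (k.choose q : ℂ) * a ((j:ℤ) - 2 * p + ((k:ℤ) - 2 * q)) := by
  set F : ℕ × ℕ → ℂ := fun x =>
    (j.choose x.1 : ℂ) * (k.choose x.2 : ℂ) * a ((j:ℤ) + k - 2 * ((x.1 + x.2 : ℕ) : ℤ)) with hF
  have hdisj : (↑(range (j + k + 1)) : Set ℕ).PairwiseDisjoint Finset.HasAntidiagonal.antidiagonal := by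
    intro m _ m' _ hmm'
    simp only [Function.onFun, Finset.disjoint_left]
    intro x hx hx'
    rw [Finset.HasAntidiagonal.mem_antidiagonal] at hx hx'
    exact hmm' (hx ▸ hx')
  have hsub : range (j + 1) ×ˢ range (k + 1) ⊆ (range (j + k + 1)).biUnion Finset.HasAntidiagonal.antidiagonal := by
    intro x hx
    simp only [Finset.mem_product, Finset.mem_range] at hx
    rw [Finset.mem_biUnion]
    exact ⟨x.1 + x.2, Finset.mem_range.2 (by omega), Finset.HasAntidiagonal.mem_antidiagonal.2 rfl⟩
  calc ∑ m ∈ range (j + k + 1), a ((j:ℤ) + k - 2 * m) * ((j + k).choose m : ℂ)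
      = ∑ m ∈ range (j + k + 1), ∑ x ∈ Finset.HasAntidiagonal.antidiagonal m, F x := by
        refine sum_congr rfl fun m hm => ?_
        rw [Nat.add_choose_eq]
        push_cast
        rw [Finset.mul_sum]
        refine sum_congr rfl fun x hx => ?_
        rw [Finset.HasAntidiagonal.mem_antidiagonal] at hx
        rw [hF]
        simp only
        rw [hx]
        push_cast
        ring
    _ = ∑ x ∈ (range (j + k + 1)).biUnion Finset.HasAntidiagonal.antidiagonal, F x :=
        (Finset.sum_biUnion hdisj).symm
    _ = ∑ x ∈ range (j + 1) ×ˢ range (k + 1), F x := by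
        refine (Finset.sum_subset hsub fun x hx hx' => ?_).symm
        simp only [Finset.mem_product, Finset.mem_range, not_and_or, not_lt] at hx'
        rw [hF]
        rcases hx' with h | h
        · simp [Nat.choose_eq_zero_of_lt (by omega : j < x.1)]
        · simp [Nat.choose_eq_zero_of_lt (by omega : k < x.2)]
    _ = ∑ p ∈ range (j + 1), ∑ q ∈ range (k + 1),
          (j.choose p : ℂ) * (k.choose q : ℂ) * a ((j:ℤ) - 2 * p + ((k:ℤ) - 2 * q)) := by
        rw [Finset.sum_product]
        refine sum_congr rfl fun p hp => sum_congr rfl fun q hq => ?_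
        rw [hF]
        simp only
        congr 2
        push_cast
        ring

noncomputable def Sf (i j : ℕ) : ℂ :=
  if j ≤ i ∧ (i - j) % 2 = 0 then (i.choose ((i - j) / 2) : ℂ) else 0

noncomputable def ρf (i : ℕ) : ℂ := if i = 0 then (1 : ℂ) / 2 else 1

private lemma fold (f : ℤ → ℂ) (j : ℕ) :
    ∑ p ∈ range (j + 1), (j.choose p : ℂ) * f ((j:ℤ) - 2 * p)
      = ∑ i ∈ range (j + 1), Sf j i * ρf i * (f i + f (-(i:ℤ))) := by
  -- Step A: reindex the RHS over p = (j - i)/2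
  have hA : ∑ i ∈ range (j + 1), Sf j i * ρf i * (f i + f (-(i:ℤ)))
      = ∑ p ∈ range (j / 2 + 1),
          (j.choose p : ℂ) * ρf (j - 2 * p) * (f ((j:ℤ) - 2 * p) + f (-((j:ℤ) - 2 * p))) := by
    have h1 : ∑ i ∈ range (j + 1), Sf j i * ρf i * (f i + f (-(i:ℤ)))
        = ∑ i ∈ (range (j + 1)).filter (fun i => (j - i) % 2 = 0),
            Sf j i * ρf i * (f i + f (-(i:ℤ))) := by
      refine (Finset.sum_filter_of_ne fun i hi hne => ?_).symm
      by_contra h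
      have : Sf j i = 0 := by
        rw [Sf, if_neg]
        intro ⟨_, h2⟩; exact h h2
      rw [this] at hne; simp at hne
    rw [h1]
    refine Finset.sum_nbij' (fun i => (j - i) / 2) (fun p => j - 2 * p)
      (fun i hi => ?_) (fun p hp => ?_) (fun i hi => ?_) (fun p hp => ?_) (fun i hi => ?_)
    · simp only [Finset.mem_filter, Finset.mem_range] at hi ⊢; omega
    · simp only [Finset.mem_filter, Finset.mem_range] at hp ⊢; omega
    · simp only [Finset.mem_filter, Finset.mem_range] at hi
      show j - 2 * ((j - i) / 2) = i; omega
    · simp only [Finset.mem_range] at hp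
      show (j - (j - 2 * p)) / 2 = p; omega
    · simp only [Finset.mem_filter, Finset.mem_range] at hi
      have h2 : j - 2 * ((j - i) / 2) = i := by omega
      have h3 : (i : ℤ) = (j : ℤ) - 2 * ((j - i) / 2 : ℕ) := by omega
      rw [Sf, if_pos ⟨by omega, hi.2⟩, h2, ← h3]
  rw [hA]
  -- Step B: split the LHS at j / 2
  have hB : ∑ p ∈ range (j + 1), (j.choose p : ℂ) * f ((j:ℤ) - 2 * p)
      = (∑ p ∈ range (j / 2 + 1), (j.choose p : ℂ) * f ((j:ℤ) - 2 * p))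
        + ∑ q ∈ range (j - j / 2), (j.choose q : ℂ) * f (-((j:ℤ) - 2 * q)) := by
    have hsplit : range (j + 1) = Finset.Ico 0 (j / 2 + 1) ∪ Finset.Ico (j / 2 + 1) (j + 1) := by
      rw [Finset.Ico_union_Ico_eq_Ico (by omega) (by omega), Finset.range_eq_Ico]
    rw [hsplit, Finset.sum_union (by
      simp only [Finset.disjoint_left, Finset.mem_Ico]
      intro x hx hx'; omega)]
    congr 1
    · rw [Finset.range_eq_Ico]
    · refine Finset.sum_nbij' (fun p => j - p) (fun q => j - q)
        (fun p hp => ?_) (fun q hq => ?_) (fun p hp => ?_) (fun q hq => ?_) (fun p hp => ?_)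
      · simp only [Finset.mem_Ico, Finset.mem_range] at hp ⊢; omega
      · simp only [Finset.mem_Ico, Finset.mem_range] at hq ⊢; omega
      · simp only [Finset.mem_Ico] at hp
        show j - (j - p) = p; omega
      · simp only [Finset.mem_range] at hq
        show j - (j - q) = q; omega
      · simp only [Finset.mem_Ico] at hp
        have h1 : j.choose p = j.choose (j - p) := (Nat.choose_symm (by omega)).symm
        have h2 : (j : ℤ) - 2 * p = -((j:ℤ) - 2 * ((j - p : ℕ) : ℤ)) := by omega
        rw [h1, h2]
  rw [hB]
  -- Step C: case on parity of j
  rcases Nat.even_or_odd j with ⟨t, ht⟩ | ⟨t, ht⟩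
  · -- j even, j = t + t
    have h1 : j / 2 = t := by omega
    have h2 : j - j / 2 = t := by omega
    rw [h2, h1, Finset.sum_range_succ, Finset.sum_range_succ
      (fun p => (j.choose p : ℂ) * ρf (j - 2 * p) * (f ((j:ℤ) - 2 * p) + f (-((j:ℤ) - 2 * p))))]
    have h3 : (j : ℤ) - 2 * (t : ℤ) = 0 := by omega
    have h4 : j - 2 * t = 0 := by omega
    have h5 : ∀ p ∈ range t, (j.choose p : ℂ) * ρf (j - 2 * p)
        * (f ((j:ℤ) - 2 * p) + f (-((j:ℤ) - 2 * p)))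
        = (j.choose p : ℂ) * f ((j:ℤ) - 2 * p) + (j.choose p : ℂ) * f (-((j:ℤ) - 2 * p)) := by
      intro p hp
      simp only [Finset.mem_range] at hp
      rw [ρf, if_neg (by omega)]
      ring
    rw [Finset.sum_congr rfl h5, Finset.sum_add_distrib, h3, h4]
    simp only [ρf, if_pos rfl, eq_self_iff_true, if_true, neg_zero]
    ring
  · -- j odd, j = 2t + 1
    have h1 : j / 2 = t := by omega
    have h2 : j - j / 2 = t + 1 := by omega
    rw [h2, h1, ← Finset.sum_add_distrib]
    refine Finset.sum_congr rfl fun p hp => ?_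
    simp only [Finset.mem_range] at hp
    rw [ρf, if_neg (by omega)]
    ring

private lemma key (ash : ℤ → ℂ) (heven : ∀ n : ℤ, ash n = ash (-n)) (j k : ℕ) :
    (1 / 2 : ℂ) * ∑ m ∈ range (j + k + 1), ash ((j:ℤ) + k - 2 * m) * ((j + k).choose m : ℂ)
      = ∑ i ∈ range (j + 1), ∑ l ∈ range (k + 1),
          Sf j i * (ρf i * (ash ((i:ℤ) - l) + ash ((i:ℤ) + l)) * ρf l) * Sf k l := by
  calc (1 / 2 : ℂ) * ∑ m ∈ range (j + k + 1), ash ((j:ℤ) + k - 2 * m) * ((j + k).choose m : ℂ)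
      = (1 / 2 : ℂ) * ∑ p ∈ range (j + 1), (j.choose p : ℂ) *
          ∑ q ∈ range (k + 1), (k.choose q : ℂ) * ash (((j:ℤ) - 2 * p) + ((k:ℤ) - 2 * q)) := by
        rw [vander]
        congr 1
        refine sum_congr rfl fun p _ => ?_
        rw [Finset.mul_sum]
        exact sum_congr rfl fun q _ => by ring
    _ = (1 / 2 : ℂ) * ∑ i ∈ range (j + 1), Sf j i * ρf i *
          ((∑ q ∈ range (k + 1), (k.choose q : ℂ) * ash ((i:ℤ) + ((k:ℤ) - 2 * q))) +
           (∑ q ∈ range (k + 1), (k.choose q : ℂ) * ash (-(i:ℤ) + ((k:ℤ) - 2 * q)))) := by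
        rw [fold (fun x => ∑ q ∈ range (k + 1), (k.choose q : ℂ) * ash (x + ((k:ℤ) - 2 * q))) j]
    _ = (1 / 2 : ℂ) * ∑ i ∈ range (j + 1), Sf j i * ρf i *
          ((∑ l ∈ range (k + 1), Sf k l * ρf l * (ash ((i:ℤ) + l) + ash ((i:ℤ) + -(l:ℤ)))) +
           (∑ l ∈ range (k + 1), Sf k l * ρf l * (ash (-(i:ℤ) + l) + ash (-(i:ℤ) + -(l:ℤ))))) := by
        congr 1
        refine sum_congr rfl fun i _ => ?_
        rw [fold (fun y => ash ((i:ℤ) + y)) k, fold (fun y => ash (-(i:ℤ) + y)) k]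
    _ = ∑ i ∈ range (j + 1), ∑ l ∈ range (k + 1),
          Sf j i * (ρf i * (ash ((i:ℤ) - l) + ash ((i:ℤ) + l)) * ρf l) * Sf k l := by
        rw [Finset.mul_sum]
        refine sum_congr rfl fun i _ => ?_
        rw [← Finset.sum_add_distrib, Finset.mul_sum, Finset.mul_sum]
        refine sum_congr rfl fun l _ => ?_
        have e1 : ash (-(i:ℤ) + l) = ash ((i:ℤ) - l) := by
          rw [heven (-(i:ℤ) + l)]
          congr 1
          ring
        have e2 : ash (-(i:ℤ) + -(l:ℤ)) = ash ((i:ℤ) + l) := by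
          rw [heven (-(i:ℤ) + -(l:ℤ))]
          congr 1
          ring
        have e3 : ash ((i:ℤ) + -(l:ℤ)) = ash ((i:ℤ) - l) := by
          rw [← sub_eq_add_neg]
        rw [e1, e2, e3]
        ring

/-- the Hankel matrix `B = (b_{j+k})` with
`b_n = (1/2) Σ_{k=0}^n a^#_{n-2k} C(n,k)` factors as `B = S_# R A^# R S_#ᵀ`, and
consequently `det H_n[b] = (1/4) det((a^#_{j-k} + a^#_{j+k})_{j,k<n})` for every `n ≥ 1`. -/
theorem hankel_factorization (ash : ℤ → ℂ) (heven : ∀ n : ℤ, ash n = ash (-n))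
    (b : ℕ → ℂ)
    (hb : ∀ n : ℕ, b n = (1 / 2) *
      ∑ k ∈ Finset.range (n + 1), ash ((n : ℤ) - 2 * k) * (n.choose k))
    (Ash S : ℕ → ℕ → ℂ) (ρ : ℕ → ℂ)
    (hAsh : ∀ j k : ℕ, Ash j k = ash ((j : ℤ) - k) + ash ((j : ℤ) + k))
    (hS : ∀ i j : ℕ, S i j =
      if j ≤ i ∧ (i - j) % 2 = 0 then (i.choose ((i - j) / 2) : ℂ) else 0)
    (hρ : ∀ i : ℕ, ρ i = if i = 0 then (1 : ℂ) / 2 else 1) :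
    (∀ j k : ℕ, b (j + k) = ∑' i : ℕ, ∑' l : ℕ, S j i * (ρ i * Ash i l * ρ l) * S k l) ∧
    (∀ n : ℕ, 1 ≤ n →
      (Matrix.of fun j k : Fin n => b ((j : ℕ) + k)).det =
        (1 / 4) * (Matrix.of fun j k : Fin n => Ash j k).det) := by
  have hS0 : ∀ a c : ℕ, ¬ c < a + 1 → S a c = 0 := by
    intro a c h
    rw [hS]
    exact if_neg (by omega)
  have hkey : ∀ j k : ℕ, b (j + k) = ∑ i ∈ range (j + 1), ∑ l ∈ range (k + 1),
      S j i * (ρ i * Ash i l * ρ l) * S k l := by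
    intro j k
    rw [hb]
    simp only [Nat.cast_add]
    rw [key ash heven j k]
    refine sum_congr rfl fun i _ => sum_congr rfl fun l _ => ?_
    rw [hS, hS, hρ, hρ, hAsh, Sf, Sf, ρf, ρf]
  constructor
  · intro j k
    rw [hkey j k]
    have hinner : ∀ i : ℕ, ∑' l : ℕ, S j i * (ρ i * Ash i l * ρ l) * S k l
        = ∑ l ∈ range (k + 1), S j i * (ρ i * Ash i l * ρ l) * S k l := by
      intro i
      refine tsum_eq_sum fun l hl => ?_
      rw [Finset.mem_range] at hl
      rw [hS0 k l hl, mul_zero]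
    refine Eq.symm ?_
    calc ∑' i : ℕ, ∑' l : ℕ, S j i * (ρ i * Ash i l * ρ l) * S k l
        = ∑ i ∈ range (j + 1), ∑' l : ℕ, S j i * (ρ i * Ash i l * ρ l) * S k l := by
          refine tsum_eq_sum fun i hi => ?_
          rw [Finset.mem_range] at hi
          have : ∀ l : ℕ, S j i * (ρ i * Ash i l * ρ l) * S k l = 0 := fun l => by
            rw [hS0 j i hi, zero_mul, zero_mul]
          rw [tsum_congr this, tsum_zero]
      _ = ∑ i ∈ range (j + 1), ∑ l ∈ range (k + 1),
            S j i * (ρ i * Ash i l * ρ l) * S k l :=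
          sum_congr rfl fun i _ => hinner i
  · intro n hn
    set Sm : Matrix (Fin n) (Fin n) ℂ := Matrix.of fun j i : Fin n => S j i with hSm
    set Dm : Matrix (Fin n) (Fin n) ℂ := Matrix.diagonal fun i : Fin n => ρ i with hDm
    set Am : Matrix (Fin n) (Fin n) ℂ := Matrix.of fun i l : Fin n => Ash i l with hAm
    have hmid : Dm * Am * Dm = Matrix.of fun i l : Fin n => ρ i * Ash i l * ρ l := by
      ext i l
      rw [hDm, hAm, Matrix.mul_diagonal, Matrix.diagonal_mul]
      simp [Matrix.of_apply]
    have hfac : (Matrix.of fun j k : Fin n => b ((j : ℕ) + k)) = Sm * (Dm * Am * Dm) * Sm.transpose := by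
      ext j k
      rw [hmid]
      simp only [Matrix.of_apply, Matrix.mul_apply, Matrix.transpose_apply, hSm]
      rw [hkey (j : ℕ) (k : ℕ)]
      have hstep1 : ∀ i : ℕ, i ∈ range (j + 1) →
          ∑ l ∈ range ((k : ℕ) + 1), S j i * (ρ i * Ash i l * ρ l) * S k l
            = ∑ l ∈ range n, S j i * (ρ i * Ash i l * ρ l) * S k l := by
        intro i _
        refine Finset.sum_subset (by intro l hl; rw [Finset.mem_range] at hl ⊢; omega) ?_
        intro l _ hl
        rw [Finset.mem_range] at hl
        rw [hS0 k l hl, mul_zero]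
      rw [Finset.sum_congr rfl hstep1]
      have hstep2 : ∑ i ∈ range ((j : ℕ) + 1), ∑ l ∈ range n, S j i * (ρ i * Ash i l * ρ l) * S k l
          = ∑ i ∈ range n, ∑ l ∈ range n, S j i * (ρ i * Ash i l * ρ l) * S k l := by
        refine Finset.sum_subset (by intro i hi; rw [Finset.mem_range] at hi ⊢; omega) ?_
        intro i _ hi
        rw [Finset.mem_range] at hi
        exact Finset.sum_eq_zero fun l _ => by rw [hS0 j i hi, zero_mul, zero_mul]
      rw [hstep2]
      rw [Finset.sum_comm]
      rw [Fin.sum_univ_eq_sum_range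
        (fun x => (∑ i : Fin n, S (j:ℕ) (i:ℕ) * (ρ (i:ℕ) * Ash (i:ℕ) x * ρ x)) * S (k:ℕ) x) n]
      refine Finset.sum_congr rfl fun l _ => ?_
      rw [Finset.sum_mul,
        Fin.sum_univ_eq_sum_range (fun i => S (j:ℕ) i * (ρ i * Ash i l * ρ l) * S (k:ℕ) l) n]
    rw [hfac, Matrix.det_mul, Matrix.det_mul, Matrix.det_mul, Matrix.det_transpose]
    have hdS : Sm.det = 1 := by
      rw [Matrix.det_of_lowerTriangular Sm (by
        intro i j hij
        have hij' : i < j := hij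
        simp only [hSm, Matrix.of_apply]
        exact hS0 _ _ (by omega))]
      refine Finset.prod_eq_one fun i _ => ?_
      simp only [hSm, Matrix.of_apply]
      rw [hS]
      simp
    have hdD : Dm.det = 1 / 2 := by
      rw [hDm, Matrix.det_diagonal]
      rw [Finset.prod_eq_single (⟨0, hn⟩ : Fin n) ?_ ?_]
      · rw [hρ]
        simp
      · intro c _ hc
        rw [hρ, if_neg]
        intro h
        exact hc (Fin.ext h)
      · intro h
        exact absurd (Finset.mem_univ _) h
    rw [hdS, hdD, Matrix.det_mul, hdD]
    ring
end

section
/- Let b ∈ L¹[-1,1] and define a^#(e^{iθ}) = b(cos θ)(2+2cos θ)^{1/2}(2-2cos θ)^{1/2} with Fourier coefficients a^#_k. Then the Hankel moment coefficients b_n = (1/π)∫_{-1}^1 b(x)(2x)^n dx satisfy b_n = (1/2) Σ_{k=0}^n a^#_{n-2k} C(n,k), and consequently det( (b_{j+k})_{j,k=0}^{n-1} ) = (1/4) det( T_n(a^#) + H_n(z a^#) ), where T_n(a^#) + H_n(z a^#) is the matrix (a^#_{j-k} + a^#_{j+k})_{j,k=0}^{n-1}. -/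
open MeasureTheory intervalIntegral Finset Real

/-! ### Auxiliary definitions -/

/-- The symbol `a^#` written as a function of `θ`: `2 |sin θ| b (cos θ)`. -/
noncomputable def Fc (b : ℝ → ℝ) (θ : ℝ) : ℂ := ((2 * |Real.sin θ| * b (Real.cos θ) : ℝ) : ℂ)

/-- Coefficients of `(2 cos θ)^j` in the basis `Ψf`. -/
noncomputable def cc (j l : ℕ) : ℂ :=
  if (j + l) % 2 = 0 ∧ l ≤ j then (j.choose ((j - l) / 2) : ℂ) else 0

/-- The "cosine" basis functions. -/
noncomputable def Ψf (l : ℕ) (θ : ℝ) : ℂ :=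
  if l = 0 then 1
  else Complex.exp (Complex.I * l * θ) + Complex.exp (-(Complex.I * l * θ))

/-- Complex exponentials. -/
noncomputable def Ef (k : ℤ) (θ : ℝ) : ℂ := Complex.exp (Complex.I * k * θ)

/-- Diagonal normalization weights. -/
noncomputable def dd (l : ℕ) : ℂ :=
  if l = 0 then ((Real.sqrt 2 : ℝ) : ℂ)⁻¹ else ((Real.sqrt 2 : ℝ) : ℂ)

/-- Multiplication weights in the three-term recurrence. -/
noncomputable def wght (l : ℕ) : ℂ := if l = 0 then 0 else if l = 1 then 2 else 1

/-! ### Elementary lemmas -/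

lemma sqrt_prod (θ : ℝ) :
    Real.sqrt (2 + 2 * Real.cos θ) * Real.sqrt (2 - 2 * Real.cos θ) = 2 * |Real.sin θ| := by
  rw [← Real.sqrt_mul (by nlinarith [Real.neg_one_le_cos θ]) ]
  have h : (2 + 2 * Real.cos θ) * (2 - 2 * Real.cos θ) = (2 * Real.sin θ)^2 := by
    have := Real.sin_sq_add_cos_sq θ; nlinarith
  rw [h, Real.sqrt_sq_eq_abs, abs_mul]; norm_num

lemma Fc_eq (b : ℝ → ℝ) (θ : ℝ) :
    ((b (Real.cos θ) : ℂ) * (Real.sqrt (2 + 2 * Real.cos θ) : ℝ) *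
      (Real.sqrt (2 - 2 * Real.cos θ) : ℝ)) = Fc b θ := by
  unfold Fc
  push_cast
  rw [mul_assoc, ← Complex.ofReal_mul, _root_.sqrt_prod]
  push_cast
  ring

lemma Fc_even (b : ℝ → ℝ) (θ : ℝ) : Fc b (-θ) = Fc b θ := by unfold Fc; simp

lemma dd_zero : dd 0 = ((Real.sqrt 2 : ℝ) : ℂ)⁻¹ := by simp [dd]

lemma dd_pos {l : ℕ} (h : l ≠ 0) : dd l = ((Real.sqrt 2 : ℝ) : ℂ) := by simp [dd, h]

lemma sqrt2_sq : ((Real.sqrt 2 : ℝ) : ℂ)^2 = 2 := by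
  norm_cast
  rw [Real.sq_sqrt] <;> norm_num

lemma sqrt2_ne : ((Real.sqrt 2 : ℝ) : ℂ) ≠ 0 := by
  intro h
  have h2 : Real.sqrt 2 = 0 := by exact_mod_cast h
  have := Real.sqrt_pos.mpr (by norm_num : (0:ℝ) < 2)
  linarith

lemma psi_zero (θ : ℝ) : Ψf 0 θ = 1 := by simp [Ψf]

lemma psi_eq (l : ℕ) (hl : l ≠ 0) (θ : ℝ) :
    Ψf l θ = Complex.exp (Complex.I * θ)^l + Complex.exp (-(Complex.I * θ))^l := by
  unfold Ψf
  rw [if_neg hl]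
  rw [show Complex.I * (l:ℂ) * (θ:ℂ) = (l:ℕ) * (Complex.I * θ) by push_cast; ring,
    Complex.exp_nat_mul,
    show -((l:ℕ) * (Complex.I * (θ:ℂ))) = (l:ℕ) * (-(Complex.I * θ)) by ring,
    Complex.exp_nat_mul]

lemma psi_eq_E {l : ℕ} (hl : l ≠ 0) (θ : ℝ) : Ψf l θ = Ef (l:ℤ) θ + Ef (-(l:ℤ)) θ := by
  unfold Ψf Ef
  rw [if_neg hl]
  congr 2 <;> push_cast <;> ring

lemma psi_continuous (l : ℕ) : Continuous (Ψf l) := by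
  unfold Ψf
  split_ifs
  · exact continuous_const
  · fun_prop

lemma Ef_mul (k1 k2 : ℤ) (θ : ℝ) : Ef k1 θ * Ef k2 θ = Ef (k1 + k2) θ := by
  unfold Ef
  rw [← Complex.exp_add]
  congr 1
  push_cast; ring

lemma two_cos_eq (θ : ℝ) :
    (((2 * Real.cos θ : ℝ)) : ℂ)
      = Complex.exp (Complex.I * θ) + Complex.exp (-(Complex.I * θ)) := by
  push_cast
  rw [Complex.cos]
  ring_nf

lemma two_cos_pow (n : ℕ) (θ : ℝ) :
    (((2 * Real.cos θ : ℝ)) : ℂ)^n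
      = ∑ k ∈ Finset.range (n+1),
          (n.choose k : ℂ) * Complex.exp (-Complex.I * (((n:ℤ) - 2*k : ℤ) : ℂ) * θ) := by
  have h2c : (((2 * Real.cos θ : ℝ)) : ℂ)
      = Complex.exp ((θ:ℂ) * Complex.I) + Complex.exp (-((θ:ℂ) * Complex.I)) := by
    push_cast
    rw [Complex.cos]
    ring_nf
  rw [h2c, add_pow]
  apply Finset.sum_congr rfl
  intro k hk
  rw [← Complex.exp_nat_mul, ← Complex.exp_nat_mul, ← Complex.exp_add, mul_comm]
  congr 1
  push_cast [Nat.cast_sub (Nat.lt_succ_iff.mp (Finset.mem_range.mp hk))]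
  ring

/-! ### Coefficient recurrences -/

lemma cc_diag (j : ℕ) : cc j j = 1 := by
  unfold cc
  rw [if_pos ⟨by omega, le_refl j⟩]
  simp [Nat.sub_self]

lemma cc_zero_of_lt {j l : ℕ} (h : j < l) : cc j l = 0 := by
  simp [cc]; omega

lemma cc_recS (j l : ℕ) : cc (j+1) (l+1) = cc j l + cc j (l+2) := by
  unfold cc
  split_ifs with h1 h2 h3 h2 h3 h3 h3 <;> try (exfalso; omega)
  · norm_cast
    have e1 : j + 1 - (l+1) = j - l := by omega
    have hm : (j-l)/2 = (j-(l+2))/2 + 1 := by omega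
    rw [e1, hm, Nat.choose_succ_succ]
    simp only [Nat.succ_eq_add_one]
    omega
  · have hj : j = l := by omega
    subst hj
    have : (j + 1 - (j+1))/2 = 0 := by omega
    rw [this, show (j - j)/2 = 0 by omega]
    norm_num
  · norm_num

lemma cc_rec0 (j : ℕ) : cc (j+1) 0 = 2 * cc j 1 := by
  unfold cc
  split_ifs with h1 h2 <;> try (exfalso; omega)
  · norm_cast
    have hk : (j+1-0)/2 = (j-1)/2 + 1 := by omega
    rw [hk, Nat.choose_succ_succ]
    have : j.choose ((j-1)/2 + 1) = j.choose ((j-1)/2) := by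
      rw [show (j-1)/2 + 1 = j - ((j-1)/2) by omega, Nat.choose_symm (by omega)]
    rw [this]; ring
  · norm_num

/-! ### Three-term recurrence and expansion of powers of `2 cos θ` -/

lemma psi_mul (l : ℕ) (θ : ℝ) :
    (((2 * Real.cos θ : ℝ)) : ℂ) * Ψf l θ = Ψf (l+1) θ + wght l * Ψf (l-1) θ := by
  set z := Complex.exp (Complex.I * θ) with hz
  set w := Complex.exp (-(Complex.I * θ)) with hw
  have hzw : z * w = 1 := by rw [hz, hw, ← Complex.exp_add]; simp
  rw [two_cos_eq]
  match l with
  | 0 =>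
    rw [psi_eq 1 one_ne_zero θ, ← hz, ← hw, show wght 0 = 0 by simp [wght],
      show Ψf 0 θ = 1 by simp [Ψf]]
    ring
  | 1 =>
    rw [show (1:ℕ)+1 = 2 from rfl, show (1:ℕ)-1 = 0 from rfl,
      psi_eq 1 one_ne_zero θ, psi_eq 2 two_ne_zero θ, ← hz, ← hw,
      show wght 1 = 2 by simp [wght], show Ψf 0 θ = 1 by simp [Ψf]]
    linear_combination (2:ℂ) * hzw
  | (m+2) =>
    rw [show m + 2 + 1 = m + 3 from rfl, show m + 2 - 1 = m + 1 from rfl,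
      psi_eq (m+2) (by omega) θ, psi_eq (m+3) (by omega) θ, psi_eq (m+1) (by omega) θ,
      ← hz, ← hw, show wght (m+2) = 1 by simp [wght]]
    linear_combination (z^(m+1) + w^(m+1)) * hzw

lemma cos_pow_expand (j : ℕ) (θ : ℝ) :
    (((2 * Real.cos θ : ℝ)) : ℂ)^j = ∑ l ∈ Finset.range (j+1), cc j l * Ψf l θ := by
  induction j with
  | zero => simp [cc_diag 0, Ψf]
  | succ j ih =>
    rw [pow_succ, ih, Finset.sum_mul]
    have hterm : ∀ l, (cc j l * Ψf l θ) * (((2 * Real.cos θ : ℝ)) : ℂ)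
        = cc j l * Ψf (l+1) θ + cc j l * wght l * Ψf (l-1) θ := by
      intro l
      rw [mul_comm _ ((((2 * Real.cos θ : ℝ)) : ℂ)), ← mul_assoc]
      rw [mul_comm ((((2 * Real.cos θ : ℝ)) : ℂ)) (cc j l), mul_assoc, psi_mul]
      ring
    rw [Finset.sum_congr rfl (fun l _ => hterm l), Finset.sum_add_distrib]
    rw [Finset.sum_range_succ' (fun l => cc (j+1) l * Ψf l θ) (j+1)]
    have hrec : ∀ l, cc (j+1) (l+1) * Ψf (l+1) θ
        = cc j l * Ψf (l+1) θ + cc j (l+2) * Ψf (l+1) θ := by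
      intro l; rw [cc_recS]; ring
    rw [Finset.sum_congr rfl (fun l _ => hrec l), Finset.sum_add_distrib, cc_rec0]
    have key : ∑ l ∈ Finset.range (j+1), cc j l * wght l * Ψf (l-1) θ
        = (∑ l ∈ Finset.range (j+1), cc j (l+2) * Ψf (l+1) θ) + 2 * cc j 1 * Ψf 0 θ := by
      match j with
      | 0 =>
        simp [wght, cc_zero_of_lt (by omega : (0:ℕ) < 1), cc_zero_of_lt (by omega : (0:ℕ) < 2)]
      | (i+1) =>
        rw [Finset.sum_range_succ' (fun l => cc (i+1) l * wght l * Ψf (l-1) θ) (i+1)]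
        rw [Finset.sum_range_succ' (fun l => cc (i+1) (l+1) * wght (l+1) * Ψf (l+1-1) θ) i]
        have e0 : cc (i+1) 0 * wght 0 * Ψf (0-1) θ = 0 := by simp [wght]
        have e1 : cc (i+1) (0+1) * wght (0+1) * Ψf (0+1-1) θ = 2 * cc (i+1) 1 * Ψf 0 θ := by
          rw [show wght (0+1) = 2 by simp [wght]]; ring
        rw [e0, e1, add_zero]
        have e2 : ∀ l, cc (i+1) (l+1+1) * wght (l+1+1) * Ψf (l+1+1-1) θ
            = cc (i+1) (l+2) * Ψf (l+1) θ := by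
          intro l
          rw [show wght (l+1+1) = 1 by simp [wght], show l+1+1-1 = l+1 from rfl,
            mul_one]
        rw [Finset.sum_congr rfl (fun l _ => e2 l)]
        rw [Finset.sum_range_succ (fun l => cc (i+1) (l+2) * Ψf (l+1) θ) (i+1),
          Finset.sum_range_succ (fun l => cc (i+1) (l+2) * Ψf (l+1) θ) i,
          cc_zero_of_lt (by omega : i+1 < i+2), cc_zero_of_lt (by omega : i+1 < i+1+2)]
        simp
    rw [key]
    ring

lemma cos_pow_expand' {j n : ℕ} (h : j < n) (θ : ℝ) :
    (((2 * Real.cos θ : ℝ)) : ℂ)^j = ∑ l ∈ Finset.range n, cc j l * Ψf l θ := by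
  rw [cos_pow_expand]
  apply Finset.sum_subset (Finset.range_subset_range.mpr (by omega))
  intro l _ hl
  rw [cc_zero_of_lt (by simp at hl ⊢; omega), zero_mul]

/-! ### Change of variables and integrability -/

lemma cov_aux (b : ℝ → ℝ) (hb : IntervalIntegrable b MeasureTheory.volume (-1) 1) (n : ℕ) :
    (∫ x in (-1:ℝ)..1, b x * (2*x)^n)
      = (∫ θ in (0:ℝ)..π, |Real.sin θ| * (b (Real.cos θ) * (2*Real.cos θ)^n))
    ∧ IntervalIntegrable (fun θ => |Real.sin θ| * (b (Real.cos θ) * (2*Real.cos θ)^n))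
        MeasureTheory.volume 0 π := by
  set g : ℝ → ℝ := fun x => b x * (2*x)^n with hg
  have himg : Real.cos '' Set.Icc 0 π = Set.Icc (-1) 1 := Real.bijOn_cos.image_eq
  have hder : ∀ θ ∈ Set.Icc (0:ℝ) π, HasDerivWithinAt Real.cos (-Real.sin θ) (Set.Icc 0 π) θ :=
    fun θ _ => (Real.hasDerivAt_cos θ).hasDerivWithinAt
  have hgi : IntervalIntegrable g MeasureTheory.volume (-1) 1 :=
    hb.mul_continuousOn (by fun_prop)
  have hgi' : IntegrableOn g (Set.Icc (-1:ℝ) 1) :=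
    (intervalIntegrable_iff_integrableOn_Icc_of_le (by norm_num)).mp hgi
  have key : ∫ x in Real.cos '' Set.Icc 0 π, g x
      = ∫ θ in Set.Icc (0:ℝ) π, |(-Real.sin θ)| • g (Real.cos θ) :=
    MeasureTheory.integral_image_eq_integral_abs_deriv_smul measurableSet_Icc hder Real.injOn_cos g
  have hptw : (fun θ => |(-Real.sin θ)| • g (Real.cos θ))
      = fun θ => |Real.sin θ| * (b (Real.cos θ) * (2*Real.cos θ)^n) := by
    funext θ; simp [hg, abs_neg]
  constructor
  · rw [intervalIntegral.integral_of_le (by norm_num : (-1:ℝ) ≤ 1),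
      intervalIntegral.integral_of_le Real.pi_pos.le,
      ← MeasureTheory.integral_Icc_eq_integral_Ioc, ← MeasureTheory.integral_Icc_eq_integral_Ioc,
      ← himg, key, hptw]
  · rw [intervalIntegrable_iff_integrableOn_Icc_of_le Real.pi_pos.le, ← hptw]
    exact (MeasureTheory.integrableOn_image_iff_integrableOn_abs_deriv_smul measurableSet_Icc
      hder Real.injOn_cos g).mp (himg ▸ hgi')

lemma Fc_integrable (b : ℝ → ℝ) (hb : IntervalIntegrable b MeasureTheory.volume (-1) 1) :
    IntervalIntegrable (Fc b) MeasureTheory.volume (-π) π := by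
  have h0 : IntervalIntegrable (fun θ => |Real.sin θ| * (b (Real.cos θ) * (2*Real.cos θ)^0))
      MeasureTheory.volume 0 π := (cov_aux b hb 0).2
  have hr : IntervalIntegrable (fun θ => 2 * |Real.sin θ| * b (Real.cos θ))
      MeasureTheory.volume 0 π := by
    have h2 := h0.const_mul (2:ℝ)
    have he : (fun θ => 2 * (|Real.sin θ| * (b (Real.cos θ) * (2*Real.cos θ)^0)))
        = fun θ => 2 * |Real.sin θ| * b (Real.cos θ) := by
      funext θ; simp; ring
    rwa [he] at h2
  have hl : IntervalIntegrable (fun θ => 2 * |Real.sin θ| * b (Real.cos θ))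
      MeasureTheory.volume (-π) 0 := by
    have h := (IntervalIntegrable.iff_comp_neg).mp hr
    simp only [Real.sin_neg, Real.cos_neg, abs_neg, neg_zero] at h
    exact h.symm
  have : IntervalIntegrable (fun θ => 2 * |Real.sin θ| * b (Real.cos θ))
      MeasureTheory.volume (-π) π := hl.trans hr
  rw [intervalIntegrable_iff] at this ⊢
  exact this.ofReal

lemma even_integral {f : ℝ → ℂ} (hfe : ∀ θ, f (-θ) = f θ)
    (hi : IntervalIntegrable f MeasureTheory.volume 0 π) :
    ∫ θ in (-π)..π, f θ = 2 * ∫ θ in (0:ℝ)..π, f θ := by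
  have h1 : IntervalIntegrable f MeasureTheory.volume (-π) 0 := by
    have h := (IntervalIntegrable.iff_comp_neg).mp hi
    simp only [hfe, neg_zero] at h
    exact h.symm
  have h2 : ∫ θ in (-π)..(0:ℝ), f θ = ∫ θ in (0:ℝ)..π, f θ := by
    have h := intervalIntegral.integral_comp_neg (a := (0:ℝ)) (b := π) (f := f)
    simp only [hfe, neg_zero] at h
    exact h.symm
  rw [← intervalIntegral.integral_add_adjacent_intervals h1 hi, h2]; ring

lemma bmFc (b : ℝ → ℝ) (hb : IntervalIntegrable b MeasureTheory.volume (-1) 1)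
    (bm : ℕ → ℝ)
    (hbm : ∀ n : ℕ, bm n = (1 / Real.pi) * ∫ x in (-1:ℝ)..1, b x * (2 * x) ^ n) (n : ℕ) :
    (∫ θ in (-Real.pi)..Real.pi, Fc b θ * (((2 * Real.cos θ : ℝ)) : ℂ)^n)
      = 4 * Real.pi * (bm n : ℂ) := by
  have hi0 : IntervalIntegrable (fun θ => Fc b θ * (((2 * Real.cos θ : ℝ)) : ℂ)^n)
      MeasureTheory.volume 0 π := by
    apply IntervalIntegrable.mul_continuousOn
    · apply (Fc_integrable b hb).mono_set
      rw [Set.uIcc_subset_uIcc_iff_le]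
      simp [Real.pi_pos.le, Real.pi_nonneg, min_le_iff, le_max_iff]
    · apply Continuous.continuousOn; fun_prop
  have heven : ∀ θ, Fc b (-θ) * (((2 * Real.cos (-θ) : ℝ)) : ℂ)^n
      = Fc b θ * (((2 * Real.cos θ : ℝ)) : ℂ)^n := by
    intro θ; rw [Fc_even, Real.cos_neg]
  have h1 : (∫ θ in (-Real.pi)..Real.pi, Fc b θ * (((2 * Real.cos θ : ℝ)) : ℂ)^n)
      = 2 * ∫ θ in (0:ℝ)..Real.pi, Fc b θ * (((2 * Real.cos θ : ℝ)) : ℂ)^n :=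
    even_integral heven hi0
  have h2 : (∫ θ in (0:ℝ)..Real.pi, Fc b θ * (((2 * Real.cos θ : ℝ)) : ℂ)^n)
      = ((∫ θ in (0:ℝ)..Real.pi,
          (2 * |Real.sin θ| * b (Real.cos θ)) * (2 * Real.cos θ)^n : ℝ) : ℂ) := by
    rw [← intervalIntegral.integral_ofReal]
    apply intervalIntegral.integral_congr
    intro θ _
    simp only [Fc]
    push_cast
    ring
  have h3 : (∫ θ in (0:ℝ)..Real.pi, (2 * |Real.sin θ| * b (Real.cos θ)) * (2 * Real.cos θ)^n)
      = 2 * ∫ θ in (0:ℝ)..Real.pi, |Real.sin θ| * (b (Real.cos θ) * (2 * Real.cos θ)^n) := by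
    rw [← intervalIntegral.integral_const_mul]
    apply intervalIntegral.integral_congr
    intro θ _; ring
  have h4 := (cov_aux b hb n).1
  have h5 := hbm n
  rw [h1, h2, h3, ← h4]
  have h6 : (∫ x in (-1:ℝ)..1, b x * (2*x)^n) = Real.pi * bm n := by
    rw [h5]; field_simp
  rw [h6]
  push_cast
  ring

/-! ### Fourier coefficient identities -/

section main

variable (b : ℝ → ℝ) (ash : ℤ → ℂ)

lemma intFcExp
    (hash : ∀ k : ℤ, ash k = (1 / (2 * Real.pi)) *
      ∫ θ in (-Real.pi)..Real.pi,
        (b (Real.cos θ) * Real.sqrt (2 + 2 * Real.cos θ) * Real.sqrt (2 - 2 * Real.cos θ) : ℂ) *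
          Complex.exp (-Complex.I * k * θ)) (l : ℤ) :
    (∫ θ in (-Real.pi)..Real.pi, Fc b θ * Complex.exp (-Complex.I * (l:ℂ) * (θ:ℂ)))
      = 2 * Real.pi * ash l := by
  have h := hash l
  have hcong : (∫ θ in (-Real.pi)..Real.pi,
        (b (Real.cos θ) * Real.sqrt (2 + 2 * Real.cos θ) * Real.sqrt (2 - 2 * Real.cos θ) : ℂ) *
          Complex.exp (-Complex.I * l * θ))
      = ∫ θ in (-Real.pi)..Real.pi, Fc b θ * Complex.exp (-Complex.I * (l:ℂ) * (θ:ℂ)) := by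
    apply intervalIntegral.integral_congr
    intro θ _
    simp only
    rw [Fc_eq]
  rw [hcong] at h
  rw [h]
  have hπ : (Real.pi : ℂ) ≠ 0 := by simpa using Real.pi_ne_zero
  field_simp

variable (hFcExp : ∀ l : ℤ,
    (∫ θ in (-Real.pi)..Real.pi, Fc b θ * Complex.exp (-Complex.I * (l:ℂ) * (θ:ℂ)))
      = 2 * Real.pi * ash l)

include hFcExp in
lemma ash_symm (l : ℤ) : ash (-l) = ash l := by
  have h1 := hFcExp l
  have h2 := hFcExp (-l)
  have h3 : (∫ θ in (-Real.pi)..Real.pi, Fc b θ * Complex.exp (-Complex.I * ((-l : ℤ):ℂ) * (θ:ℂ)))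
      = ∫ θ in (-Real.pi)..Real.pi, Fc b θ * Complex.exp (-Complex.I * (l:ℂ) * (θ:ℂ)) := by
    have h := intervalIntegral.integral_comp_neg (a := -Real.pi) (b := Real.pi)
      (f := fun θ => Fc b θ * Complex.exp (-Complex.I * (l:ℂ) * (θ:ℂ)))
    simp only [neg_neg] at h
    rw [← h]
    apply intervalIntegral.integral_congr
    intro θ _
    simp only [Fc_even]
    push_cast
    ring_nf
  rw [h3, h1] at h2
  have hπ : (Real.pi : ℂ) ≠ 0 := by simpa using Real.pi_ne_zero
  field_simp at h2
  exact h2.symm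

include hFcExp in
lemma intFcE (k : ℤ) :
    (∫ θ in (-Real.pi)..Real.pi, Fc b θ * Ef k θ) = 2 * Real.pi * ash (-k) := by
  rw [← hFcExp (-k)]
  apply intervalIntegral.integral_congr
  intro θ _
  simp only [Ef]
  congr 2
  push_cast
  ring

variable (hb : IntervalIntegrable b MeasureTheory.volume (-1) 1)

include hb hFcExp in
lemma intFcPow (n : ℕ) :
    (∫ θ in (-Real.pi)..Real.pi, Fc b θ * (((2 * Real.cos θ : ℝ)) : ℂ)^n)
      = 2 * Real.pi * ∑ k ∈ Finset.range (n+1), ash ((n:ℤ) - 2*k) * (n.choose k : ℂ) := by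
  have hint : ∀ k : ℕ, IntervalIntegrable
      (fun θ => Fc b θ *
        ((n.choose k : ℂ) * Complex.exp (-Complex.I * (((n:ℤ) - 2*k : ℤ) : ℂ) * θ)))
      MeasureTheory.volume (-Real.pi) Real.pi := by
    intro k
    apply (Fc_integrable b hb).mul_continuousOn
    apply Continuous.continuousOn
    fun_prop
  calc (∫ θ in (-Real.pi)..Real.pi, Fc b θ * (((2 * Real.cos θ : ℝ)) : ℂ)^n)
      = ∫ θ in (-Real.pi)..Real.pi, ∑ k ∈ Finset.range (n+1),
          Fc b θ * ((n.choose k : ℂ) * Complex.exp (-Complex.I * (((n:ℤ) - 2*k : ℤ) : ℂ) * θ)) := by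
        apply intervalIntegral.integral_congr
        intro θ _
        simp only
        rw [two_cos_pow, Finset.mul_sum]
    _ = ∑ k ∈ Finset.range (n+1), ∫ θ in (-Real.pi)..Real.pi,
          Fc b θ * ((n.choose k : ℂ) * Complex.exp (-Complex.I * (((n:ℤ) - 2*k : ℤ) : ℂ) * θ)) := by
        exact intervalIntegral.integral_finset_sum (fun k _ => hint k)
    _ = ∑ k ∈ Finset.range (n+1), (n.choose k : ℂ) * (2 * Real.pi * ash ((n:ℤ) - 2*k)) := by
        apply Finset.sum_congr rfl
        intro k _
        rw [← hFcExp ((n:ℤ) - 2*k), ← intervalIntegral.integral_const_mul]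
        apply intervalIntegral.integral_congr
        intro θ _
        simp only
        ring
    _ = _ := by
        rw [Finset.mul_sum]
        apply Finset.sum_congr rfl
        intro k _
        ring

/-! ### The Gram-matrix entries -/

include hb in
lemma FcE_integrable (k : ℤ) :
    IntervalIntegrable (fun θ => Fc b θ * Ef k θ) MeasureTheory.volume (-Real.pi) Real.pi := by
  apply (Fc_integrable b hb).mul_continuousOn
  apply Continuous.continuousOn
  unfold Ef
  fun_prop

variable (hFcE : ∀ k : ℤ,
    (∫ θ in (-Real.pi)..Real.pi, Fc b θ * Ef k θ) = 2 * Real.pi * ash (-k))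
variable (hsym : ∀ l : ℤ, ash (-l) = ash l)

include hb hFcE hsym in
lemma intFcPsiPsi (l m : ℕ) :
    (∫ θ in (-Real.pi)..Real.pi, Fc b θ * (Ψf l θ * Ψf m θ))
      = 2 * Real.pi * (dd l * dd m * (ash ((l:ℤ) - (m:ℤ)) + ash ((l:ℤ) + (m:ℤ)))) := by
  have s2 := sqrt2_sq
  have sne := sqrt2_ne
  have hE2 : ∀ k1 k2 : ℤ, (∫ θ in (-Real.pi)..Real.pi, (Fc b θ * Ef k1 θ + Fc b θ * Ef k2 θ))
      = 2 * Real.pi * (ash (-k1) + ash (-k2)) := by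
    intro k1 k2
    rw [intervalIntegral.integral_add (FcE_integrable b hb _) (FcE_integrable b hb _),
      hFcE, hFcE]
    ring
  rcases Nat.eq_zero_or_pos l with hl | hl
  · subst hl
    rcases Nat.eq_zero_or_pos m with hm | hm
    · subst hm
      have h0 := hFcE 0
      have hcong : (∫ θ in (-Real.pi)..Real.pi, Fc b θ * (Ψf 0 θ * Ψf 0 θ))
          = ∫ θ in (-Real.pi)..Real.pi, Fc b θ * Ef 0 θ := by
        apply intervalIntegral.integral_congr; intro θ _
        simp only [psi_zero, mul_one, Ef]
        simp
      rw [hcong, h0, dd_zero,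
        show ((Real.sqrt 2 : ℝ) : ℂ)⁻¹ * ((Real.sqrt 2 : ℝ) : ℂ)⁻¹ = 2⁻¹ by
          rw [← mul_inv, ← pow_two, s2]]
      push_cast
      ring
    · have hm' : m ≠ 0 := by omega
      have hcong : (∫ θ in (-Real.pi)..Real.pi, Fc b θ * (Ψf 0 θ * Ψf m θ))
          = ∫ θ in (-Real.pi)..Real.pi, (Fc b θ * Ef (m:ℤ) θ + Fc b θ * Ef (-(m:ℤ)) θ) := by
        apply intervalIntegral.integral_congr; intro θ _
        simp only
        rw [psi_zero, psi_eq_E hm', one_mul]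
        ring
      rw [hcong, hE2, neg_neg,
        show dd 0 * dd m = 1 by
          rw [dd_zero, dd_pos hm']; exact inv_mul_cancel₀ sne]
      push_cast
      ring
  · have hl' : l ≠ 0 := by omega
    rcases Nat.eq_zero_or_pos m with hm | hm
    · subst hm
      have hcong : (∫ θ in (-Real.pi)..Real.pi, Fc b θ * (Ψf l θ * Ψf 0 θ))
          = ∫ θ in (-Real.pi)..Real.pi, (Fc b θ * Ef (l:ℤ) θ + Fc b θ * Ef (-(l:ℤ)) θ) := by
        apply intervalIntegral.integral_congr; intro θ _
        simp only
        rw [psi_zero, psi_eq_E hl', mul_one]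
        ring
      rw [hcong, hE2, neg_neg,
        show dd l * dd 0 = 1 by
          rw [dd_zero, dd_pos hl']; exact mul_inv_cancel₀ sne]
      rw [hsym (l:ℤ)]
      push_cast
      ring
    · have hm' : m ≠ 0 := by omega
      have hcong : (∫ θ in (-Real.pi)..Real.pi, Fc b θ * (Ψf l θ * Ψf m θ))
          = ∫ θ in (-Real.pi)..Real.pi,
            ((Fc b θ * Ef ((l:ℤ)+(m:ℤ)) θ + Fc b θ * Ef ((l:ℤ)-(m:ℤ)) θ)
              + (Fc b θ * Ef (-(l:ℤ)+(m:ℤ)) θ + Fc b θ * Ef (-(l:ℤ)-(m:ℤ)) θ)) := by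
        apply intervalIntegral.integral_congr; intro θ _
        simp only
        rw [psi_eq_E hl', psi_eq_E hm']
        rw [show (Ef (l:ℤ) θ + Ef (-(l:ℤ)) θ) * (Ef (m:ℤ) θ + Ef (-(m:ℤ)) θ)
            = Ef (l:ℤ) θ * Ef (m:ℤ) θ + Ef (l:ℤ) θ * Ef (-(m:ℤ)) θ
              + Ef (-(l:ℤ)) θ * Ef (m:ℤ) θ + Ef (-(l:ℤ)) θ * Ef (-(m:ℤ)) θ by ring]
        rw [Ef_mul, Ef_mul, Ef_mul, Ef_mul]
        rw [show (l:ℤ) + -(m:ℤ) = (l:ℤ) - (m:ℤ) by ring,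
          show -(l:ℤ) + -(m:ℤ) = -(l:ℤ) - (m:ℤ) by ring]
        ring
      have hintadd : (∫ θ in (-Real.pi)..Real.pi,
            ((Fc b θ * Ef ((l:ℤ)+(m:ℤ)) θ + Fc b θ * Ef ((l:ℤ)-(m:ℤ)) θ)
              + (Fc b θ * Ef (-(l:ℤ)+(m:ℤ)) θ + Fc b θ * Ef (-(l:ℤ)-(m:ℤ)) θ)))
          = 2 * Real.pi * (ash (-((l:ℤ)+(m:ℤ))) + ash (-((l:ℤ)-(m:ℤ))))
            + 2 * Real.pi * (ash (-(-(l:ℤ)+(m:ℤ))) + ash (-(-(l:ℤ)-(m:ℤ)))) := by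
        rw [intervalIntegral.integral_add
          (((FcE_integrable b hb _).add (FcE_integrable b hb _)))
          (((FcE_integrable b hb _).add (FcE_integrable b hb _))), hE2, hE2]
      rw [hcong, hintadd]
      rw [show dd l * dd m = 2 by
        rw [dd_pos hl', dd_pos hm', ← pow_two]; exact s2]
      rw [hsym ((l:ℤ)+(m:ℤ)), show -((l:ℤ)-(m:ℤ)) = (m:ℤ)-(l:ℤ) by ring,
        show -(-(l:ℤ)+(m:ℤ)) = (l:ℤ)-(m:ℤ) by ring,
        show -(-(l:ℤ)-(m:ℤ)) = (l:ℤ)+(m:ℤ) by ring,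
        show ash ((m:ℤ)-(l:ℤ)) = ash ((l:ℤ)-(m:ℤ)) by
          rw [show (m:ℤ)-(l:ℤ) = -((l:ℤ)-(m:ℤ)) by ring, hsym]]
      ring

/-! ### The moment entries as quadratic forms -/

variable (bm : ℕ → ℝ)
variable (hbmFc : ∀ n : ℕ,
    (∫ θ in (-Real.pi)..Real.pi, Fc b θ * (((2 * Real.cos θ : ℝ)) : ℂ)^n)
      = 4 * Real.pi * (bm n : ℂ))
variable (hPsiPsi : ∀ l m : ℕ,
    (∫ θ in (-Real.pi)..Real.pi, Fc b θ * (Ψf l θ * Ψf m θ))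
      = 2 * Real.pi * (dd l * dd m * (ash ((l:ℤ) - (m:ℤ)) + ash ((l:ℤ) + (m:ℤ)))))

include hb hbmFc hPsiPsi in
lemma hB_aux (n : ℕ) (j k : Fin n) :
    ((bm ((j:ℕ) + (k:ℕ)) : ℝ) : ℂ) = (1/2) *
      ∑ l ∈ Finset.range n, ∑ m ∈ Finset.range n,
        cc j l * cc k m * (dd l * dd m * (ash ((l:ℤ) - (m:ℤ)) + ash ((l:ℤ) + (m:ℤ)))) := by
  have hπ : (Real.pi : ℂ) ≠ 0 := by simpa using Real.pi_ne_zero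
  have hint : ∀ l m : ℕ, IntervalIntegrable
      (fun θ => cc j l * cc k m * (Fc b θ * (Ψf l θ * Ψf m θ)))
      MeasureTheory.volume (-Real.pi) Real.pi := by
    intro l m
    apply IntervalIntegrable.const_mul
    apply (Fc_integrable b hb).mul_continuousOn
    exact (((psi_continuous l).mul (psi_continuous m))).continuousOn
  have key : (∫ θ in (-Real.pi)..Real.pi, Fc b θ * (((2 * Real.cos θ : ℝ)) : ℂ)^((j:ℕ) + (k:ℕ)))
      = ∑ l ∈ Finset.range n, ∑ m ∈ Finset.range n,
          cc j l * cc k m * (2 * Real.pi * (dd l * dd m *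
            (ash ((l:ℤ) - (m:ℤ)) + ash ((l:ℤ) + (m:ℤ))))) := by
    have hcong : (∫ θ in (-Real.pi)..Real.pi,
          Fc b θ * (((2 * Real.cos θ : ℝ)) : ℂ)^((j:ℕ) + (k:ℕ)))
        = ∫ θ in (-Real.pi)..Real.pi, ∑ l ∈ Finset.range n, ∑ m ∈ Finset.range n,
            cc j l * cc k m * (Fc b θ * (Ψf l θ * Ψf m θ)) := by
      apply intervalIntegral.integral_congr
      intro θ _
      simp only
      rw [pow_add, cos_pow_expand' j.isLt θ, cos_pow_expand' k.isLt θ, Finset.sum_mul_sum]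
      rw [Finset.mul_sum]
      apply Finset.sum_congr rfl
      intro l _
      rw [Finset.mul_sum]
      apply Finset.sum_congr rfl
      intro m _
      ring
    have hintsum : ∀ l : ℕ, IntervalIntegrable
        (fun θ => ∑ m ∈ Finset.range n, cc j l * cc k m * (Fc b θ * (Ψf l θ * Ψf m θ)))
        MeasureTheory.volume (-Real.pi) Real.pi := by
      intro l
      have h := IntervalIntegrable.sum (μ := MeasureTheory.volume) (Finset.range n)
        (fun m ( _ : m ∈ Finset.range n) => hint l m)
      simpa [Finset.sum_fn] using h
    rw [hcong, intervalIntegral.integral_finset_sum (fun l _ => hintsum l)]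
    apply Finset.sum_congr rfl
    intro l _
    rw [intervalIntegral.integral_finset_sum (fun m _ => hint l m)]
    apply Finset.sum_congr rfl
    intro m _
    rw [intervalIntegral.integral_const_mul, hPsiPsi l m]
  rw [hbmFc ((j:ℕ) + (k:ℕ))] at key
  have expand : ∑ l ∈ Finset.range n, ∑ m ∈ Finset.range n,
        cc j l * cc k m * (2 * Real.pi * (dd l * dd m *
          (ash ((l:ℤ) - (m:ℤ)) + ash ((l:ℤ) + (m:ℤ)))))
      = 2 * Real.pi * ∑ l ∈ Finset.range n, ∑ m ∈ Finset.range n,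
          cc j l * cc k m * (dd l * dd m *
            (ash ((l:ℤ) - (m:ℤ)) + ash ((l:ℤ) + (m:ℤ)))) := by
    rw [Finset.mul_sum]
    apply Finset.sum_congr rfl
    intro l _
    rw [Finset.mul_sum]
    apply Finset.sum_congr rfl
    intro m _
    ring
  rw [expand] at key
  apply mul_left_cancel₀ (a := 4 * (Real.pi : ℂ))
    (by intro h; rw [mul_eq_zero] at h; rcases h with h | h
        · norm_num at h
        · exact hπ h)
  rw [key]
  ring

end main

/-! ### The determinant identity -/

lemma matrix_det_step (n : ℕ) (hn : 1 ≤ n) (ash : ℤ → ℂ) (bmc : ℕ → ℂ)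
    (hB : ∀ j k : Fin n, bmc ((j:ℕ) + (k:ℕ)) = (1/2) *
      ∑ l ∈ Finset.range n, ∑ m ∈ Finset.range n,
        cc j l * cc k m * (dd l * dd m * (ash ((l:ℤ) - (m:ℤ)) + ash ((l:ℤ) + (m:ℤ))))) :
    (Matrix.of fun j k : Fin n => bmc ((j : ℕ) + k)).det =
      (1 / 4) * (Matrix.of fun j k : Fin n =>
        ash ((j : ℤ) - k) + ash ((j : ℤ) + k)).det := by
  obtain ⟨n', rfl⟩ : ∃ n', n = n' + 1 := ⟨n - 1, by omega⟩
  set N := n' + 1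
  set Cm : Matrix (Fin N) (Fin N) ℂ := Matrix.of (fun j l : Fin N => cc j l) with hCm
  set Dm : Matrix (Fin N) (Fin N) ℂ := Matrix.diagonal (fun l : Fin N => dd l) with hDm
  set Mm : Matrix (Fin N) (Fin N) ℂ :=
    Matrix.of (fun j k : Fin N => ash ((j : ℤ) - k) + ash ((j : ℤ) + k)) with hMm
  have hfact : (Matrix.of fun j k : Fin N => bmc ((j : ℕ) + k))
      = (1/2 : ℂ) • (Cm * (Dm * Mm * Dm) * Cm.transpose) := by
    have hG : ∀ l m : Fin N, (Dm * Mm * Dm) l m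
        = dd l * dd m * (ash ((l : ℤ) - m) + ash ((l : ℤ) + m)) := by
      intro l m
      rw [hDm, Matrix.mul_diagonal, Matrix.diagonal_mul, hMm]
      simp only [Matrix.of_apply]
      ring
    ext j k
    rw [Matrix.of_apply, hB j k, Matrix.smul_apply, smul_eq_mul]
    congr 1
    have hRHS : (Cm * (Dm * Mm * Dm) * Cm.transpose) j k
        = ∑ m : Fin N, ∑ l : Fin N, cc (j:ℕ) (l:ℕ) * cc (k:ℕ) (m:ℕ) *
            (dd (l:ℕ) * dd (m:ℕ) * (ash ((l:ℤ) - (m:ℤ)) + ash ((l:ℤ) + (m:ℤ)))) := by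
      rw [Matrix.mul_apply]
      apply Finset.sum_congr rfl
      intro m _
      rw [Matrix.mul_apply, Finset.sum_mul]
      apply Finset.sum_congr rfl
      intro l _
      rw [hG l m, Matrix.transpose_apply, hCm]
      simp only [Matrix.of_apply]
      ring
    rw [hRHS, Finset.sum_comm]
    rw [← Fin.sum_univ_eq_sum_range
      (fun m => ∑ l ∈ Finset.range N, cc (j:ℕ) l * cc (k:ℕ) m *
        (dd l * dd m * (ash ((l:ℤ) - (m:ℤ)) + ash ((l:ℤ) + (m:ℤ))))) N]
    apply Finset.sum_congr rfl
    intro m _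
    exact (Fin.sum_univ_eq_sum_range
      (fun l => cc (j:ℕ) l * cc (k:ℕ) (m:ℕ) *
        (dd l * dd (m:ℕ) * (ash ((l:ℤ) - ((m:ℕ):ℤ)) + ash ((l:ℤ) + ((m:ℕ):ℤ))))) N).symm
  rw [hfact, Matrix.det_smul, Matrix.det_mul, Matrix.det_mul, Matrix.det_mul, Matrix.det_mul,
    Matrix.det_transpose]
  have hdetC : Cm.det = 1 := by
    rw [Matrix.det_of_lowerTriangular Cm (fun i j hij => cc_zero_of_lt hij)]
    apply Finset.prod_eq_one
    intro i _
    exact cc_diag i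
  have hdetD : Dm.det = ∏ l : Fin N, dd l := Matrix.det_diagonal
  have hP2 : (∏ l : Fin N, dd (l:ℕ)) * (∏ l : Fin N, dd (l:ℕ)) = 2⁻¹ * 2^n' := by
    rw [← Finset.prod_mul_distrib]
    rw [Fin.prod_univ_succ]
    have h0 : dd ((0 : Fin N) : ℕ) * dd ((0 : Fin N) : ℕ) = 2⁻¹ := by
      rw [show ((0 : Fin N) : ℕ) = 0 from rfl, dd_zero, ← mul_inv, ← pow_two, sqrt2_sq]
    have hs : ∀ i : Fin n', dd ((i.succ : Fin N) : ℕ) * dd ((i.succ : Fin N) : ℕ) = 2 := by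
      intro i
      rw [dd_pos (by simp [Fin.val_succ]), ← pow_two, sqrt2_sq]
    rw [h0, Finset.prod_congr rfl (fun i _ => hs i), Finset.prod_const]
    simp [Finset.card_univ]
  have h2 : ((1:ℂ)/2)^n' * 2^n' = 1 := by rw [← mul_pow]; norm_num
  rw [hdetC, hdetD]
  rw [Fintype.card_fin]
  have hfin : ((1:ℂ)/2)^N * (1 * ((∏ l : Fin N, dd (l:ℕ)) * Mm.det * (∏ l : Fin N, dd (l:ℕ))) * 1)
      = (1/4) * Mm.det := by
    rw [show ((1:ℂ)/2)^N = (1/2)^n' * (1/2) by rw [pow_succ]]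
    linear_combination (((1:ℂ)/2)^n' * (1/2) * Mm.det) * hP2 + (2⁻¹ * 2⁻¹ * Mm.det) * h2
  rw [hfin]

/-! ### Main theorem -/

/-- for `b ∈ L¹[-1,1]` and
`a^#(e^{iθ}) = b(cos θ)(2+2cos θ)^{1/2}(2-2cos θ)^{1/2}` with Fourier coefficients `a^#_k`,
the moment coefficients `b_n = (1/π)∫_{-1}^1 b(x)(2x)^n dx` satisfy
`b_n = (1/2) Σ_{k=0}^n a^#_{n-2k} C(n,k)`, and consequently
`det (b_{j+k})_{j,k<n} = (1/4) det (a^#_{j-k} + a^#_{j+k})_{j,k<n}`. -/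
theorem toeplitz_hankel_identity (b : ℝ → ℝ)
    (hb : IntervalIntegrable b MeasureTheory.volume (-1) 1)
    (ash : ℤ → ℂ)
    (hash : ∀ k : ℤ, ash k = (1 / (2 * Real.pi)) *
      ∫ θ in (-Real.pi)..Real.pi,
        (b (Real.cos θ) * Real.sqrt (2 + 2 * Real.cos θ) * Real.sqrt (2 - 2 * Real.cos θ) : ℂ) *
          Complex.exp (-Complex.I * k * θ))
    (bm : ℕ → ℝ)
    (hbm : ∀ n : ℕ, bm n = (1 / Real.pi) * ∫ x in (-1:ℝ)..1, b x * (2 * x) ^ n) :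
    (∀ n : ℕ, (bm n : ℂ) = (1 / 2) *
      ∑ k ∈ Finset.range (n + 1), ash ((n : ℤ) - 2 * k) * (n.choose k)) ∧
    (∀ n : ℕ, 1 ≤ n →
      (Matrix.of fun j k : Fin n => (bm ((j : ℕ) + k) : ℂ)).det =
        (1 / 4) * (Matrix.of fun j k : Fin n =>
          ash ((j : ℤ) - k) + ash ((j : ℤ) + k)).det) := by
  have hπ : (Real.pi : ℂ) ≠ 0 := by simpa using Real.pi_ne_zero
  have hFcExp := intFcExp b ash hash
  have hsym := ash_symm b ash hFcExp
  have hFcE := intFcE b ash hFcExp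
  have hbmFc := bmFc b hb bm hbm
  have hPsiPsi := intFcPsiPsi b ash hb hFcE hsym
  constructor
  · intro n
    have hpow := intFcPow b ash hFcExp hb n
    rw [hbmFc n] at hpow
    apply mul_left_cancel₀ (a := 4 * (Real.pi : ℂ))
      (by intro h; rw [mul_eq_zero] at h; rcases h with h | h
          · norm_num at h
          · exact hπ h)
    rw [hpow]
    ring
  · intro n hn
    exact matrix_det_step n hn ash (fun i => ((bm i : ℝ) : ℂ))
      (fun j k => hB_aux b ash hb bm hbmFc hPsiPsi n j k)
end
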